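/- arXiv:1910.12280 — 4 statements merged into one kernel-verified Lean document; each statement's English description precedes it below -/
import Mathlib

section
/- Let R be a commutative ring and s_1,…,s_k a permutable weak regular sequence of non-unit elements of R. Let α_1,…,α_n ∈ ℕ^k and set a_i = s_1^{α_{i1}}⋯s_k^{α_{ik}}. Then the R-submodule {(c_1,…,c_n) ∈ R^n : c_1a_1+⋯+c_na_n = 0} of R^n is generated by the elements (∏_{l=1}^k s_l^{max(α_{il},α_{jl})−α_{il}})·e_i − (∏_{l=1}^k s_l^{max(α_{il},α_{jl})−α_{jl}})·e_j for 1 ≤ i < j ≤ n, where e_1,…,e_n is the standard basis of R^n. -/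
open MvPolynomial
open scoped MonomialOrder

namespace PaperGB

variable {n : ℕ} {R : Type*} [CommSemiring R]

/-- The degree (leading exponent) of a multivariate polynomial w.r.t. a monomial order. -/
noncomputable def mDeg (m : MonomialOrder (Fin n)) (f : MvPolynomial (Fin n) R) :
    Fin n →₀ ℕ :=
  m.toSyn.symm (f.support.sup fun d => m.toSyn d)

/-- The leading coefficient. -/
noncomputable def mLC (m : MonomialOrder (Fin n)) (f : MvPolynomial (Fin n) R) : R :=
  f.coeff (mDeg m f)

/-- The leading term. -/
noncomputable def mLT (m : MonomialOrder (Fin n)) (f : MvPolynomial (Fin n) R) :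
    MvPolynomial (Fin n) R :=
  monomial (mDeg m f) (mLC m f)

variable {R : Type*} [CommRing R]

/-- The leading term ideal. -/
noncomputable def mLTIdeal (m : MonomialOrder (Fin n)) (I : Ideal (MvPolynomial (Fin n) R)) :
    Ideal (MvPolynomial (Fin n) R) :=
  Ideal.span ((fun g => mLT m g) '' {g | g ∈ I ∧ g ≠ 0})

/-- `f` is a Gröbner basis of `I`. -/
def IsGroebnerBasis (m : MonomialOrder (Fin n)) (I : Ideal (MvPolynomial (Fin n) R))
    {k : ℕ} (f : Fin k → MvPolynomial (Fin n) R) : Prop :=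
  (∀ i, f i ≠ 0) ∧ (∀ i, f i ∈ I) ∧
    Ideal.span (Set.range fun i => mLT m (f i)) = mLTIdeal m I

/-- `g` reduces to zero modulo the family `f`. -/
def ReducesToZero (m : MonomialOrder (Fin n)) {k : ℕ} (f : Fin k → MvPolynomial (Fin n) R)
    (g : MvPolynomial (Fin n) R) : Prop :=
  ∃ p : Fin k → MvPolynomial (Fin n) R,
    g = ∑ i, p i * f i ∧
    ∀ i, p i * f i ≠ 0 → mDeg m (p i) + mDeg m (f i) ≼[m] mDeg m g

/-- A weakly regular sequence. -/
def IsWeakRegularSeq {k : ℕ} (s : Fin k → R) : Prop :=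
  ∀ i : Fin k, ∀ x : R,
    s i * x ∈ Ideal.span (s '' {j | j < i}) → x ∈ Ideal.span (s '' {j | j < i})

/-- A permutable weak regular sequence of non-units. -/
def IsPermutableWeakRegularSeq {k : ℕ} (s : Fin k → R) : Prop :=
  (∀ i, ¬ IsUnit (s i)) ∧ ∀ σ : Equiv.Perm (Fin k), IsWeakRegularSeq (s ∘ σ)

/-- `M` has a free resolution `0 → F_p → ⋯ → F_0 → M → 0` by finitely generated
free `S`-modules. -/
def HasFiniteFreeResolutionOfLength (S : Type*) [CommRing S] (M : Type*) [AddCommGroup M]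
    [Module S M] (p : ℕ) : Prop :=
  ∃ (d : ℕ → ℕ) (g : ∀ i : ℕ, (Fin (d (i + 1)) → S) →ₗ[S] (Fin (d i) → S))
    (ε : (Fin (d 0) → S) →ₗ[S] M),
    (∀ i, p < i → d i = 0) ∧
    Function.Surjective ε ∧
    LinearMap.range (g 0) = LinearMap.ker ε ∧
    ∀ i, LinearMap.range (g (i + 1)) = LinearMap.ker (g i)

/-- `M` has an infinite free resolution `⋯ → F_p → F_p → F_p → F_{p-1} → ⋯ → F_0 → M → 0`
by finitely generated free `S`-modules, whose modules are constant from stage `p` on. -/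
def HasEventuallyConstantFreeResolution (S : Type*) [CommRing S] (M : Type*) [AddCommGroup M]
    [Module S M] (p : ℕ) : Prop :=
  ∃ (d : ℕ → ℕ) (g : ∀ i : ℕ, (Fin (d (i + 1)) → S) →ₗ[S] (Fin (d i) → S))
    (ε : (Fin (d 0) → S) →ₗ[S] M),
    (∀ i, p ≤ i → d i = d p) ∧
    Function.Surjective ε ∧
    LinearMap.range (g 0) = LinearMap.ker ε ∧
    ∀ i, LinearMap.range (g (i + 1)) = LinearMap.ker (g i)

end PaperGB

open PaperGB

/-!
Each `s l` is a nonzerodivisor modulo the ideal generated by any finite subfamily of `s` avoiding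
it. This extends to every ideal `I` generated by s-monomials in which `s l` does not occur, by
induction on `excessDegree`: if `s j` divides a generator of degree at least two, then
`I = I₀ + s j * I₁`, where `I₀` is generated by the generators not involving `s j` and `I₁` by the
`s^(a - e_j)`, and each of `I₀`, `I₀ + (s j)` and `I₁` has smaller excess degree. Consequently,
as for monomials in a polynomial ring, `(s^α₁, …, s^αₘ) : s^β` is generated by the
`s^(β ⊔ αᵢ - β)`, so a syzygy supported on `insert i J` becomes one supported on `J` after
subtracting a combination of the pair syzygies between `i` and the elements of `J`.
-/

theorem Finset.exists_perm_image_eq_and_apply_eq {α : Type*} [Fintype α] [DecidableEq α]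
    {A B : Finset α} (h : A.card = B.card) {a b : α} (ha : a ∉ A) (hb : b ∉ B) :
    ∃ σ : Equiv.Perm α, A.image σ = B ∧ σ a = b := by
  let e : {x // x ∈ A} ≃ {x // x ∈ B} := Fintype.equivOfCardEq (by simpa using h)
  set σ₀ := e.extendSubtype
  have hσ₀ : A.image σ₀ = B :=
    Finset.eq_of_subset_of_card_le
      (Finset.image_subset_iff.2 fun x hx => e.extendSubtype_mem x hx)
      (by rw [Finset.card_image_of_injective _ σ₀.injective, h])
  have hσ₀a : σ₀ a ∉ B := by rwa [← hσ₀, σ₀.injective.mem_finset_image]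
  refine ⟨Equiv.swap (σ₀ a) b * σ₀, ?_, by simp⟩
  -- the swap only moves `σ₀ a` and `b`, neither of which lies in `B`
  rw [Equiv.Perm.coe_mul, ← Finset.image_image, hσ₀]
  exact (Finset.image_congr fun x hx => Equiv.swap_apply_of_ne_of_ne
    (ne_of_mem_of_not_mem hx hσ₀a) (ne_of_mem_of_not_mem hx hb)).trans Finset.image_id

section

variable {ι R : Type*} [CommRing R]

def IsRegularModSubfamilies (s : ι → R) : Prop :=
  ∀ (T : Finset ι) (l : ι), l ∉ T → ∀ x, s l * x ∈ Ideal.span (s '' T) → x ∈ Ideal.span (s '' T)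

theorem PaperGB.IsPermutableWeakRegularSeq.isRegularModSubfamilies {k : ℕ} {s : Fin k → R}
    (hs : IsPermutableWeakRegularSeq s) : IsRegularModSubfamilies s := by
  intro T l hl x hx
  have hcard : T.card < k := by simpa using Finset.card_lt_univ_of_notMem hl
  set t : Fin k := ⟨T.card, hcard⟩
  obtain ⟨σ, hσT, hσt⟩ := Finset.exists_perm_image_eq_and_apply_eq (A := Finset.Iio t) (a := t)
    (by simp [t]) (by simp) hl
  have himg : (s ∘ σ) '' {j | j < t} = s '' T := by
    rw [Set.image_comp, ← hσT, Finset.coe_image, Finset.coe_Iio]; rfl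
  have hreg := hs.2 σ t x
  rw [himg, Function.comp_apply, hσt] at hreg
  exact hreg hx

end

section

variable {ι R : Type*} [Fintype ι] [DecidableEq ι] [CommRing R] (s : ι → R)

def sMonomial (a : ι → ℕ) : R := ∏ l, s l ^ a l

def sMonomialIdeal (Λ : Finset (ι → ℕ)) : Ideal R := Ideal.span (sMonomial s '' Λ)

omit [DecidableEq ι] in
def excessDegree (Λ : Finset (ι → ℕ)) : ℕ := ∑ a ∈ Λ, ((∑ i, a i) - 1)

omit [DecidableEq ι] in
theorem sMonomial_zero : sMonomial s 0 = 1 := by simp [sMonomial]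

omit [DecidableEq ι] in
theorem sMonomial_add (a b : ι → ℕ) : sMonomial s (a + b) = sMonomial s a * sMonomial s b := by
  simp [sMonomial, pow_add, Finset.prod_mul_distrib]

omit [DecidableEq ι] in
theorem sMonomial_tsub_mul {a b : ι → ℕ} (h : b ≤ a) :
    sMonomial s (a - b) * sMonomial s b = sMonomial s a := by
  rw [← sMonomial_add, tsub_add_cancel_of_le h]

theorem sMonomial_single (j : ι) : sMonomial s (Pi.single j 1) = s j := by
  rw [sMonomial, Finset.prod_eq_single j (fun l _ hl => by simp [hl]) (by simp)]
  simp

omit [Fintype ι] in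
theorem single_one_le {a : ι → ℕ} {j : ι} (h : a j ≠ 0) : Pi.single j 1 ≤ a := by
  intro l
  by_cases hl : l = j
  · subst hl; simpa using Nat.one_le_iff_ne_zero.2 h
  · simp [hl]

omit [Fintype ι] in
theorem tsub_single_of_eq_zero {a : ι → ℕ} {j : ι} (h : a j = 0) : a - Pi.single j 1 = a := by
  ext l
  by_cases hl : l = j <;> simp_all

omit [Fintype ι] [DecidableEq ι] in
theorem tsub_sup_tsub_tsub_tsub_of_le {a β e : ι → ℕ} (h : e ≤ β) :
    (β - e) ⊔ (a - e) - (β - e) = β ⊔ a - β := by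
  have key (x y z : ℕ) (h : z ≤ y) : max (y - z) (x - z) - (y - z) = max y x - y := by omega
  ext l
  exact key _ _ _ (h l)

theorem sMonomial_eq_mul_tsub_single {a : ι → ℕ} {j : ι} (h : a j ≠ 0) :
    sMonomial s a = s j * sMonomial s (a - Pi.single j 1) := by
  rw [mul_comm, ← sMonomial_single s j, sMonomial_tsub_mul s (single_one_le h)]

theorem sum_tsub_single_add_one {a : ι → ℕ} {j : ι} (h : a j ≠ 0) :
    ∑ l, (a - Pi.single j 1 : ι → ℕ) l + 1 = ∑ l, a l := by
  conv_rhs => rw [← tsub_add_cancel_of_le (single_one_le h)]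
  simp [Finset.sum_add_distrib]

theorem eq_zero_or_eq_single_of_sum_le_one {a : ι → ℕ} (h : ∑ l, a l ≤ 1) :
    a = 0 ∨ ∃ j, a = Pi.single j 1 := by
  refine or_iff_not_imp_left.2 fun ha => ?_
  obtain ⟨j, hj⟩ := Function.ne_iff.1 ha
  have hzero : ∑ l, (a - Pi.single j 1 : ι → ℕ) l = 0 := by
    have := sum_tsub_single_add_one hj; omega
  refine ⟨j, le_antisymm (fun l => ?_) (single_one_le hj)⟩
  exact tsub_eq_zero_iff_le.1 ((Finset.sum_eq_zero_iff.1 hzero) l (Finset.mem_univ l))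

omit [DecidableEq ι] in
theorem excessDegree_filter_lt {Λ : Finset (ι → ℕ)} {a₀ : ι → ℕ} (ha₀ : a₀ ∈ Λ) {j : ι}
    (hj : a₀ j ≠ 0) (hdeg : 1 < ∑ i, a₀ i) : excessDegree (Λ.filter (· j = 0)) < excessDegree Λ :=
  Finset.sum_lt_sum_of_subset (Finset.filter_subset _ _) ha₀ (by simp [hj]) (by omega)
    fun _ _ _ => Nat.zero_le _

theorem excessDegree_insert_single (j : ι) (Λ : Finset (ι → ℕ)) :
    excessDegree (insert (Pi.single j 1) Λ) = excessDegree Λ :=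
  Finset.sum_insert_zero (by simp)

theorem excessDegree_image_tsub_single_lt {Λ : Finset (ι → ℕ)} {a₀ : ι → ℕ} (ha₀ : a₀ ∈ Λ)
    {j : ι} (hj : a₀ j ≠ 0) (hdeg : 1 < ∑ i, a₀ i) :
    excessDegree (Λ.image (· - Pi.single j 1)) < excessDegree Λ := by
  refine (Finset.sum_image_le_of_nonneg fun _ _ => Nat.zero_le _).trans_lt ?_
  refine Finset.sum_lt_sum (fun a _ => Nat.sub_le_sub_right
    (Finset.sum_le_sum fun i _ => tsub_le_self) _) ⟨a₀, ha₀, ?_⟩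
  have := sum_tsub_single_add_one hj
  omega

omit [DecidableEq ι] in
theorem sMonomial_mem_sMonomialIdeal {Λ : Finset (ι → ℕ)} {a : ι → ℕ} (ha : a ∈ Λ) :
    sMonomial s a ∈ sMonomialIdeal s Λ :=
  Ideal.subset_span ⟨a, ha, rfl⟩

omit [DecidableEq ι] in
theorem sMonomialIdeal_mono {Λ Λ' : Finset (ι → ℕ)} (h : Λ ⊆ Λ') :
    sMonomialIdeal s Λ ≤ sMonomialIdeal s Λ' :=
  Ideal.span_mono (Set.image_mono (Finset.coe_subset.2 h))

theorem sMonomialIdeal_insert_single (j : ι) (Λ : Finset (ι → ℕ)) :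
    sMonomialIdeal s (insert (Pi.single j 1) Λ) = Ideal.span {s j} ⊔ sMonomialIdeal s Λ := by
  rw [sMonomialIdeal, Finset.coe_insert, Set.image_insert_eq, Ideal.span_insert,
    sMonomial_single]
  rfl

theorem sMonomialIdeal_eq_sup (j : ι) (Λ : Finset (ι → ℕ)) :
    sMonomialIdeal s Λ = sMonomialIdeal s (Λ.filter (· j = 0)) ⊔
      Ideal.span {s j} * sMonomialIdeal s (Λ.image (· - Pi.single j 1)) := by
  apply le_antisymm
  · refine Ideal.span_le.2 ?_
    rintro _ ⟨a, ha, rfl⟩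
    by_cases haj : a j = 0
    · exact Ideal.mem_sup_left
        (sMonomial_mem_sMonomialIdeal s (Finset.mem_filter.2 ⟨ha, haj⟩))
    · rw [sMonomial_eq_mul_tsub_single s haj]
      exact Ideal.mem_sup_right (Ideal.mul_mem_mul (Ideal.mem_span_singleton_self _)
        (sMonomial_mem_sMonomialIdeal s (Finset.mem_image_of_mem _ ha)))
  · refine sup_le (sMonomialIdeal_mono s (Finset.filter_subset _ _)) ?_
    rw [sMonomialIdeal, sMonomialIdeal, Ideal.span_mul_span', Ideal.span_le]
    rintro _ ⟨_, rfl, _, ⟨_, hb, rfl⟩, rfl⟩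
    obtain ⟨a, ha, rfl⟩ := Finset.mem_image.1 hb
    show s j * sMonomial s (a - Pi.single j 1) ∈ _
    by_cases haj : a j = 0
    · rw [tsub_single_of_eq_zero haj]
      exact Ideal.mul_mem_left _ _ (sMonomial_mem_sMonomialIdeal s ha)
    · rw [← sMonomial_eq_mul_tsub_single s haj]
      exact sMonomial_mem_sMonomialIdeal s ha

theorem mem_sMonomialIdeal_image_tsub_single_of_mul_mem {Λ : Finset (ι → ℕ)} {j : ι} {x : R}
    (hreg : ∀ y, s j * y ∈ sMonomialIdeal s (Λ.filter (· j = 0)) →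
      y ∈ sMonomialIdeal s (Λ.filter (· j = 0)))
    (hx : s j * x ∈ sMonomialIdeal s Λ) :
    x ∈ sMonomialIdeal s (Λ.image (· - Pi.single j 1)) := by
  rw [sMonomialIdeal_eq_sup s j] at hx
  obtain ⟨u, hu, _, hsw, hsum⟩ := Submodule.mem_sup.1 hx
  obtain ⟨w, hw, rfl⟩ := Ideal.mem_span_singleton_mul.1 hsw
  have hfilter : Λ.filter (· j = 0) ⊆ Λ.image (· - Pi.single j 1) := fun a ha =>
    Finset.mem_image.2 ⟨a, (Finset.mem_filter.1 ha).1,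
      tsub_single_of_eq_zero (Finset.mem_filter.1 ha).2⟩
  have hxw : x - w ∈ sMonomialIdeal s (Λ.filter (· j = 0)) :=
    hreg _ (by rwa [mul_sub, ← hsum, add_sub_cancel_right])
  simpa using add_mem (sMonomialIdeal_mono s hfilter hxw) hw

end

namespace IsRegularModSubfamilies

variable {ι R : Type*} [Fintype ι] [DecidableEq ι] [CommRing R] {s : ι → R}

theorem mem_sMonomialIdeal_of_mul_mem_of_sum_le_one (hs : IsRegularModSubfamilies s)
    {Λ : Finset (ι → ℕ)} (hdeg : ∀ a ∈ Λ, ∑ i, a i ≤ 1) {l : ι} (hl : ∀ a ∈ Λ, a l = 0) {x : R}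
    (hx : s l * x ∈ sMonomialIdeal s Λ) : x ∈ sMonomialIdeal s Λ := by
  by_cases h0 : (0 : ι → ℕ) ∈ Λ
  · rw [Ideal.eq_top_of_isUnit_mem _ (sMonomial_mem_sMonomialIdeal s h0)
      (by simp [sMonomial_zero])]
    trivial
  set T := Finset.univ.filter fun j => Pi.single j 1 ∈ Λ
  have himg : sMonomial s '' Λ = s '' T := by
    ext y
    constructor
    · rintro ⟨a, ha, rfl⟩
      obtain rfl | ⟨j, rfl⟩ := eq_zero_or_eq_single_of_sum_le_one (hdeg a ha)
      · exact absurd ha h0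
      · exact ⟨j, by simpa [T] using ha, (sMonomial_single s j).symm⟩
    · rintro ⟨j, hj, rfl⟩
      exact ⟨_, (Finset.mem_filter.1 hj).2, sMonomial_single s j⟩
  have hlT : l ∉ T := fun hlT => by simpa using hl _ (Finset.mem_filter.1 hlT).2
  rw [sMonomialIdeal, himg] at hx ⊢
  exact hs T l hlT x hx

theorem mem_sMonomialIdeal_of_mul_mem (hs : IsRegularModSubfamilies s) {Λ : Finset (ι → ℕ)}
    {l : ι} (hl : ∀ a ∈ Λ, a l = 0) {x : R} (hx : s l * x ∈ sMonomialIdeal s Λ) :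
    x ∈ sMonomialIdeal s Λ := by
  induction hn : excessDegree Λ using Nat.strong_induction_on generalizing Λ l x with
  | _ n ih =>
    by_cases hlin : ∀ a ∈ Λ, ∑ i, a i ≤ 1
    · exact hs.mem_sMonomialIdeal_of_mul_mem_of_sum_le_one hlin hl hx
    obtain ⟨a₀, ha₀, hdeg⟩ : ∃ a ∈ Λ, 1 < ∑ i, a i := by simpa using hlin
    obtain ⟨j, -, hj⟩ := Finset.exists_ne_zero_of_sum_ne_zero (by omega : ∑ i, a₀ i ≠ 0)
    have hjl : j ≠ l := fun h => hj (h ▸ hl a₀ ha₀)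
    set ΛA := Λ.filter (· j = 0)
    set Λ₁ := Λ.image (· - Pi.single j 1)
    have hA : excessDegree ΛA < n := hn ▸ excessDegree_filter_lt ha₀ hj hdeg
    have hins : excessDegree (insert (Pi.single j 1) ΛA) < n := by
      rwa [excessDegree_insert_single]
    have h₁ : excessDegree Λ₁ < n := hn ▸ excessDegree_image_tsub_single_lt ha₀ hj hdeg
    have hsplit := sMonomialIdeal_eq_sup s j Λ
    have hregA (y : R) (hy : s j * y ∈ sMonomialIdeal s ΛA) : y ∈ sMonomialIdeal s ΛA :=
      ih _ hA (fun a ha => (Finset.mem_filter.1 ha).2) hy rfl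
    have hx' : x ∈ Ideal.span {s j} ⊔ sMonomialIdeal s ΛA := by
      have hle : sMonomialIdeal s Λ ≤ sMonomialIdeal s (insert (Pi.single j 1) ΛA) := by
        rw [hsplit, sMonomialIdeal_insert_single]
        exact sup_le le_sup_right (Ideal.mul_le_left.trans le_sup_left)
      rw [← sMonomialIdeal_insert_single]
      refine ih _ hins (l := l) ?_ (hle hx) rfl
      intro a ha
      rcases Finset.mem_insert.1 ha with rfl | ha
      · exact Pi.single_eq_of_ne hjl.symm _
      · exact hl a (Finset.mem_filter.1 ha).1
    obtain ⟨_, hv, u, hu, rfl⟩ := Submodule.mem_sup.1 hx'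
    obtain ⟨v, rfl⟩ := Ideal.mem_span_singleton'.1 hv
    have hlv : s l * v ∈ sMonomialIdeal s Λ₁ := by
      refine mem_sMonomialIdeal_image_tsub_single_of_mul_mem s hregA ?_
      have : s j * (s l * v) = s l * (v * s j + u) - s l * u := by ring
      rw [this]
      exact sub_mem hx (Ideal.mul_mem_left _ _
        (sMonomialIdeal_mono s (Finset.filter_subset _ _) hu))
    have hv : v ∈ sMonomialIdeal s Λ₁ := by
      refine ih _ h₁ ?_ hlv rfl
      simp only [Λ₁, Finset.mem_image]
      rintro _ ⟨a, ha, rfl⟩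
      simp [hl a ha, Pi.single_eq_of_ne hjl.symm]
    rw [hsplit]
    refine add_mem (Ideal.mem_sup_right ?_) (Ideal.mem_sup_left hu)
    rw [mul_comm v]
    exact Ideal.mul_mem_mul (Ideal.mem_span_singleton_self _) hv

theorem mem_sMonomialIdeal_image_of_mul_mem (hs : IsRegularModSubfamilies s)
    {Λ : Finset (ι → ℕ)} {β : ι → ℕ} {x : R} (hx : x * sMonomial s β ∈ sMonomialIdeal s Λ) :
    x ∈ sMonomialIdeal s (Λ.image fun a => β ⊔ a - β) := by
  induction hn : ∑ l, β l generalizing Λ β x with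
  | zero =>
    obtain rfl : β = 0 := funext fun l => Finset.sum_eq_zero_iff.1 hn l (Finset.mem_univ l)
    simpa [sMonomial_zero] using hx
  | succ n ih =>
    obtain ⟨j, -, hj⟩ := Finset.exists_ne_zero_of_sum_ne_zero (by omega : ∑ l, β l ≠ 0)
    have hx' : x * sMonomial s (β - Pi.single j 1) ∈
        sMonomialIdeal s (Λ.image (· - Pi.single j 1)) := by
      refine mem_sMonomialIdeal_image_tsub_single_of_mul_mem s
        (fun y hy => hs.mem_sMonomialIdeal_of_mul_mem (by simp) hy) ?_
      rwa [sMonomial_eq_mul_tsub_single s hj, mul_left_comm] at hx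
    have := ih hx' (by have := sum_tsub_single_add_one hj; omega)
    rwa [Finset.image_image, Function.comp_def, Finset.image_congr fun a _ =>
      tsub_sup_tsub_tsub_tsub_of_le (a := a) (single_one_le hj)] at this

end IsRegularModSubfamilies

section

variable {ι κ R : Type*} [Fintype ι] [DecidableEq κ] [CommRing R] (s : ι → R) (α : κ → ι → ℕ)

def pairSyzygy (i j : κ) : κ → R :=
  Pi.single i (sMonomial s (α i ⊔ α j - α i)) - Pi.single j (sMonomial s (α i ⊔ α j - α j))

theorem pairSyzygy_self (i : κ) : pairSyzygy s α i i = 0 := sub_self _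

theorem pairSyzygy_swap (i j : κ) : pairSyzygy s α j i = -pairSyzygy s α i j := by
  rw [pairSyzygy, pairSyzygy, sup_comm, neg_sub]

theorem pairSyzygy_apply_of_ne {i j k : κ} (hi : k ≠ i) (hj : k ≠ j) :
    pairSyzygy s α i j k = 0 := by
  simp [pairSyzygy, Pi.single_eq_of_ne hi, Pi.single_eq_of_ne hj]

theorem pairSyzygy_apply_left {i j : κ} (h : j ≠ i) :
    pairSyzygy s α i j i = sMonomial s (α i ⊔ α j - α i) := by
  simp [pairSyzygy, Pi.single_eq_of_ne h.symm]

theorem apply_eq_zero_of_mem_span_pairSyzygy {i k : κ} {J : Finset κ} (hk : k ∉ insert i J)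
    {g : κ → R} (hg : g ∈ Submodule.span R (pairSyzygy s α i '' J)) : g k = 0 := by
  have hle : Submodule.span R (pairSyzygy s α i '' J) ≤ LinearMap.ker (LinearMap.proj k) := by
    refine Submodule.span_le.2 ?_
    rintro _ ⟨j, hj, rfl⟩
    exact pairSyzygy_apply_of_ne s α (fun h => hk (h ▸ Finset.mem_insert_self _ _))
      fun h => hk (h ▸ Finset.mem_insert_of_mem hj)
  exact hle hg

variable [Fintype κ]

theorem mul_sMonomial_mem_sMonomialIdeal_of_mem_ker {i : κ} {J : Finset κ} (hi : i ∉ J)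
    {c : κ → R} (hsupp : ∀ k ∉ insert i J, c k = 0)
    (hc : c ∈ LinearMap.ker (Fintype.linearCombination R fun i => sMonomial s (α i))) :
    c i * sMonomial s (α i) ∈ sMonomialIdeal s (J.image α) := by
  rw [LinearMap.mem_ker, Fintype.linearCombination_apply,
    ← Finset.sum_subset (Finset.subset_univ _) fun k _ hk => by simp [hsupp k hk],
    Finset.sum_insert hi, add_eq_zero_iff_eq_neg, smul_eq_mul, ← Finset.sum_neg_distrib] at hc
  rw [hc]
  exact Ideal.sum_mem _ fun j hj => neg_mem (Ideal.mul_mem_left _ _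
    (sMonomial_mem_sMonomialIdeal s (Finset.mem_image_of_mem α hj)))

theorem span_pairSyzygy_le_ker :
    Submodule.span R (Set.range (Function.uncurry (pairSyzygy s α))) ≤
      LinearMap.ker (Fintype.linearCombination R fun i => sMonomial s (α i)) := by
  rw [Submodule.span_le]
  rintro _ ⟨⟨i, j⟩, rfl⟩
  simp [pairSyzygy, Fintype.linearCombination_apply_single, sMonomial_tsub_mul s le_sup_left,
    sMonomial_tsub_mul s le_sup_right]

theorem IsRegularModSubfamilies.mem_span_pairSyzygy [DecidableEq ι]
    (hs : IsRegularModSubfamilies s) (J : Finset κ) {c : κ → R} (hsupp : ∀ i ∉ J, c i = 0)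
    (hc : c ∈ LinearMap.ker (Fintype.linearCombination R fun i => sMonomial s (α i))) :
    c ∈ Submodule.span R (Set.range (Function.uncurry (pairSyzygy s α))) := by
  induction J using Finset.induction_on generalizing c with
  | empty =>
    obtain rfl : c = 0 := funext fun i => hsupp i (Finset.notMem_empty i)
    exact zero_mem _
  | insert i J hi ih =>
    have hcol := hs.mem_sMonomialIdeal_image_of_mul_mem
      (mul_sMonomial_mem_sMonomialIdeal_of_mem_ker s α hi hsupp hc)
    obtain ⟨g, hg, hgi⟩ :
        c i ∈ (Submodule.span R (pairSyzygy s α i '' J)).map (LinearMap.proj i) := by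
      rw [Submodule.map_span, Set.image_image]
      rw [sMonomialIdeal, Finset.image_image, Finset.coe_image, Set.image_image] at hcol
      convert hcol using 2
      refine Set.image_congr fun j hj => ?_
      exact pairSyzygy_apply_left s α (ne_of_mem_of_not_mem hj hi)
    have hgG : Submodule.span R (pairSyzygy s α i '' J) ≤
        Submodule.span R (Set.range (Function.uncurry (pairSyzygy s α))) :=
      Submodule.span_mono (Set.image_subset_iff.2 fun j _ => ⟨(i, j), rfl⟩)
    have hcg : c - g ∈ Submodule.span R (Set.range (Function.uncurry (pairSyzygy s α))) := by
      refine ih (fun k hk => ?_) (sub_mem hc (span_pairSyzygy_le_ker s α (hgG hg)))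
      by_cases hki : k = i
      · simp [hki, ← hgi]
      · have hk' : k ∉ insert i J := by simp [hki, hk]
        simp [hsupp k hk', apply_eq_zero_of_mem_span_pairSyzygy s α hk' hg]
    simpa using add_mem hcg (hgG hg)

theorem IsRegularModSubfamilies.ker_linearCombination_sMonomial [DecidableEq ι]
    (hs : IsRegularModSubfamilies s) :
    LinearMap.ker (Fintype.linearCombination R fun i => sMonomial s (α i)) =
      Submodule.span R (Set.range (Function.uncurry (pairSyzygy s α))) :=
  le_antisymm (fun _ hc => hs.mem_span_pairSyzygy s α Finset.univ (by simp) hc)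
    (span_pairSyzygy_le_ker s α)

omit [Fintype κ] in
theorem span_pairSyzygy_of_lt [LinearOrder κ] :
    Submodule.span R {v | ∃ i j, i < j ∧ v = pairSyzygy s α i j} =
      Submodule.span R (Set.range (Function.uncurry (pairSyzygy s α))) := by
  refine le_antisymm (Submodule.span_mono ?_) (Submodule.span_le.2 ?_)
  · rintro _ ⟨i, j, -, rfl⟩
    exact ⟨(i, j), rfl⟩
  · rintro _ ⟨⟨i, j⟩, rfl⟩
    rcases lt_trichotomy i j with h | rfl | h
    · exact Submodule.subset_span ⟨i, j, h, rfl⟩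
    · simp [pairSyzygy_self]
    · rw [Function.uncurry_apply_pair, pairSyzygy_swap]
      exact neg_mem (Submodule.subset_span ⟨j, i, h, rfl⟩)

end

/-- syzygies of monomials in a permutable weak regular sequence. -/
theorem syzygies_of_sMonomials
    {R : Type*} [CommRing R] {k : ℕ} (s : Fin k → R)
    (hs : IsPermutableWeakRegularSeq s)
    {N : ℕ} (α : Fin N → Fin k → ℕ) (a : Fin N → R)
    (ha : ∀ i, a i = ∏ l, s l ^ α i l) (c : Fin N → R) :
    (∑ i, c i * a i = 0) ↔
      c ∈ Submodule.span R
        {v : Fin N → R | ∃ i j : Fin N, i < j ∧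
          v = Pi.single i (∏ l, s l ^ (max (α i l) (α j l) - α i l))
            - Pi.single j (∏ l, s l ^ (max (α i l) (α j l) - α j l))} := by
  obtain rfl : a = fun i => sMonomial s (α i) := funext ha
  have hker := hs.isRegularModSubfamilies.ker_linearCombination_sMonomial s α
  rw [← span_pairSyzygy_of_lt] at hker
  -- `Fintype.linearCombination`, `sMonomial` and `pairSyzygy` unfold to the sums and products above
  exact SetLike.ext_iff.1 hker c
end

section
/- (Buchberger's criterion for s-monomial type polynomials.) Let R be a commutative ring with a permutable weak regular sequence s_1,…,s_k of non-units, S = R[x_1,…,x_n] with a fixed monomial order, and let G = {f_1,…,f_m} be nonzero polynomials of s-monomial type, U the ideal of S generated by f_1,…,f_m. Then G is a Gröbner basis of U if and only if for every 1 ≤ i < j ≤ m the element S′(f_i,f_j) reduces to zero modulo G. -/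
/-!
If the `fᵢ` form a Gröbner basis, every `g` in the ideal has a standard representation
`g = ∑ qᵢ fᵢ` (every term of degree `≼ deg g`): subtract from `g` a combination of monomial
multiples of the `fᵢ` that kills `LT(g)` and recurse. In particular every `S′(fᵢ, fⱼ)` reduces
to zero.

Conversely, write `g = ∑ qᵢ fᵢ` with terms of degree `≼ e`. If `deg g ≺ e`, the coefficients
`bᵢ` of `x^{e - deg fᵢ}` in `qᵢ` satisfy `∑ bᵢ lc(fᵢ) = 0`, i.e. `(bᵢ cᵢ)ᵢ` is a syzygy of the
monomials `s^{αᵢ}`. Since each `s_t` is regular modulo the ideal generated by any set of the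
other `s_v` (which is what permutability of the weak regular sequence provides), such syzygies
are combinations of the Koszul-type syzygies `s^{αᵢ ⊔ αⱼ - αᵢ} eᵢ - s^{αᵢ ⊔ αⱼ - αⱼ} eⱼ`
(induction on the total degree of the monomials).
So the top part of the representation is a combination of the `x^{e - δᵢⱼ} S′(fᵢ, fⱼ)`, and the
standard representations of the `S′(fᵢ, fⱼ)`, whose degree is `≺ δᵢⱼ`, lower `e`. By
well-founded induction `g` gets a standard representation, which puts `LT(g)` in the ideal
generated by the `LT(fᵢ)`.
-/

open MvPolynomial
open scoped MonomialOrder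

open PaperGB

/-- The `S'`-polynomial of two `s`-monomial type polynomials `f i` and `f j`,
where `mLC m (f i) = c i * ∏ t, s t ^ α i t` with `c i` a unit. -/
noncomputable def sMonSPoly {n k : ℕ} {R : Type*} [CommRing R] (m : MonomialOrder (Fin n))
    (s : Fin k → R) {M : ℕ} (f : Fin M → MvPolynomial (Fin n) R) (c : Fin M → Rˣ)
    (α : Fin M → Fin k → ℕ) (i j : Fin M) : MvPolynomial (Fin n) R :=
  MvPolynomial.monomial ((mDeg m (f i) ⊔ mDeg m (f j)) - mDeg m (f i))
      (↑(c i)⁻¹ * ∏ t, s t ^ (max (α i t) (α j t) - α i t)) * f i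
  - MvPolynomial.monomial ((mDeg m (f i) ⊔ mDeg m (f j)) - mDeg m (f j))
      (↑(c j)⁻¹ * ∏ t, s t ^ (max (α i t) (α j t) - α j t)) * f j

namespace PaperGB

section Exponents

variable {κ : Type*} {ι : Type*} {T : Finset ι} {α : ι → κ → ℕ} {i₁ : ι} {t : κ}

theorem sum_sum_filter_lt [Fintype κ] (hi₁ : i₁ ∈ T) (ht : α i₁ t ≠ 0) :
    ∑ i ∈ T with α i t = 0, ∑ v, α i v < ∑ i ∈ T, ∑ v, α i v :=
  Finset.sum_lt_sum_of_subset (Finset.filter_subset _ T) hi₁ (by simp [ht])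
    ((Nat.pos_of_ne_zero ht).trans_le (Finset.single_le_sum (fun _ _ => Nat.zero_le _)
      (Finset.mem_univ t))) fun _ _ _ => Nat.zero_le _

variable [DecidableEq κ]

theorem sum_sum_tsub_single_lt [Fintype κ] (hi₁ : i₁ ∈ T) (ht : α i₁ t ≠ 0) :
    ∑ i ∈ T, ∑ v, (α i - Pi.single t 1 : κ → ℕ) v < ∑ i ∈ T, ∑ v, α i v := by
  refine Finset.sum_lt_sum (fun i _ => Finset.sum_le_sum fun v _ => tsub_le_self)
    ⟨i₁, hi₁, Finset.sum_lt_sum (fun v _ => tsub_le_self) ⟨t, Finset.mem_univ t, ?_⟩⟩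
  simp only [Pi.sub_apply, Pi.single_eq_same]
  omega

theorem tsub_single_eq_self {β : κ → ℕ} (h : β t = 0) : β - Pi.single t 1 = β := by
  ext v
  by_cases hv : v = t
  · subst hv; simp [h]
  · simp [hv]

theorem sup_tsub_tsub_single {β γ : κ → ℕ} (h : β t ≠ 0) :
    (β - Pi.single t 1) ⊔ (γ - Pi.single t 1) - (β - Pi.single t 1) = β ⊔ γ - β := by
  ext v
  by_cases hv : v = t
  · subst hv; simp; omega
  · simp [hv]

theorem sup_tsub_eq_sup_tsub_tsub_single_add {β γ : κ → ℕ} (hβ : β t = 0) (hγ : γ t ≠ 0) :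
    β ⊔ γ - β = (β - Pi.single t 1) ⊔ (γ - Pi.single t 1) - (β - Pi.single t 1)
      + Pi.single t 1 := by
  ext v
  by_cases hv : v = t
  · subst hv; simp [hβ]; omega
  · simp [hv]

end Exponents

section Koszul

variable {R : Type*} [CommRing R] {κ : Type*} [Fintype κ] {ι : Type*}

theorem sum_sum_sub_swap_smul {M : Type*} [AddCommGroup M] [Module R M] (T : Finset ι)
    (μ : ι → ι → R) (F : ι → ι → M) :
    ∑ i ∈ T, ∑ j ∈ T, (μ i j - μ j i) • F i j = ∑ i ∈ T, ∑ j ∈ T, μ i j • (F i j - F j i) := by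
  simp only [sub_smul, smul_sub, Finset.sum_sub_distrib]
  rw [Finset.sum_comm (f := fun i j => μ j i • F i j)]

def sMon (s : κ → R) (β : κ → ℕ) : R := ∏ v, s v ^ β v

theorem sMon_zero (s : κ → R) : sMon s 0 = 1 := by
  simp [sMon]

theorem sMon_add (s : κ → R) (β γ : κ → ℕ) : sMon s (β + γ) = sMon s β * sMon s γ := by
  simp only [sMon, Pi.add_apply, pow_add, Finset.prod_mul_distrib]

theorem sMon_tsub_mul (s : κ → R) {β γ : κ → ℕ} (h : β ≤ γ) :
    sMon s (γ - β) * sMon s β = sMon s γ := by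
  rw [← sMon_add, tsub_add_cancel_of_le h]

theorem sMon_single [DecidableEq κ] (s : κ → R) (t : κ) : sMon s (Pi.single t 1) = s t := by
  rw [sMon, Finset.prod_eq_single t (fun v _ hv => by simp [hv]) (by simp)]
  simp

theorem sMon_eq_mul_sMon_tsub_single [DecidableEq κ] (s : κ → R) {β : κ → ℕ} {t : κ}
    (h : β t ≠ 0) : sMon s β = s t * sMon s (β - Pi.single t 1) := by
  rw [← sMon_single s t, ← sMon_add, add_tsub_cancel_of_le]
  intro v
  by_cases hv : v = t
  · subst hv; simpa [Nat.one_le_iff_ne_zero]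
  · simp [hv]

/-- The `i`-th entry of `∑ μ i j • (s^{αᵢ ⊔ αⱼ - αᵢ} eᵢ - s^{αᵢ ⊔ αⱼ - αⱼ} eⱼ)`, a combination
of the Koszul-type syzygies of the monomials `s^{αᵢ}`, `i ∈ T`. -/
def koszulComb (s : κ → R) (T : Finset ι) (α : ι → κ → ℕ) (μ : ι → ι → R) (i : ι) : R :=
  ∑ j ∈ T, (μ i j - μ j i) * sMon s (α i ⊔ α j - α i)

theorem sum_koszulComb_mul_sMon (s : κ → R) (T : Finset ι) (α : ι → κ → ℕ) (μ : ι → ι → R) :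
    ∑ i ∈ T, koszulComb s T α μ i * sMon s (α i) = 0 := by
  have h : ∀ i j, (μ i j - μ j i) * sMon s (α i ⊔ α j - α i) * sMon s (α i)
      = (μ i j - μ j i) • sMon s (α i ⊔ α j) := fun i j => by
    rw [mul_assoc, sMon_tsub_mul s le_sup_left, smul_eq_mul]
  simp only [koszulComb, Finset.sum_mul, h, sum_sum_sub_swap_smul]
  refine Finset.sum_eq_zero fun i _ => Finset.sum_eq_zero fun j _ => ?_
  rw [sup_comm (α j), sub_self, smul_zero]

theorem exists_koszulComb_of_forall_eq_zero (s : κ → R) {T : Finset ι} {α : ι → κ → ℕ}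
    (hα : ∀ i ∈ T, α i = 0) {a : ι → R} {J : Ideal R} (h : ∑ i ∈ T, a i ∈ J) :
    ∃ μ, ∀ i ∈ T, a i - koszulComb s T α μ i ∈ J := by
  classical
  rcases T.eq_empty_or_nonempty with rfl | ⟨i₀, hi₀⟩
  · exact ⟨0, by simp⟩
  refine ⟨fun i j => if j = i₀ then a i else 0, fun i hi => ?_⟩
  have hcomb : koszulComb s T α (fun i j => if j = i₀ then a i else 0) i
      = a i - if i = i₀ then ∑ j ∈ T, a j else 0 := by
    rw [koszulComb, Finset.sum_congr rfl fun j hj => by rw [hα i hi, hα j hj, sup_idem,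
      tsub_zero, sMon_zero, mul_one], Finset.sum_sub_distrib, Finset.sum_ite_eq' T i₀, if_pos hi₀]
    split_ifs with hi <;> simp [hi]
  rw [hcomb, sub_sub_cancel]
  split_ifs
  · exact h
  · exact J.zero_mem

variable [DecidableEq κ]

theorem mul_sum_ite_mul_sMon_tsub_single (s : κ → R) (T : Finset ι) (α : ι → κ → ℕ) (t : κ)
    (a y : ι → R) :
    s t * ∑ i ∈ T, (if α i t = 0 then y i else a i) * sMon s (α i - Pi.single t 1)
      = ∑ i ∈ T, a i * sMon s (α i)
        - ∑ i ∈ T with α i t = 0, (a i - s t * y i) * sMon s (α i) := by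
  rw [Finset.sum_filter, Finset.mul_sum, ← Finset.sum_sub_distrib]
  refine Finset.sum_congr rfl fun i _ => ?_
  split_ifs with hi
  · rw [tsub_single_eq_self hi]; ring
  · rw [sMon_eq_mul_sMon_tsub_single s hi]; ring

theorem koszulComb_ite_of_ne (s : κ → R) (T : Finset ι) (α : ι → κ → ℕ) {t : κ}
    (μ₀ μ₁ : ι → ι → R) {i : ι} (hi : α i t ≠ 0) :
    koszulComb s T α (fun i j => if α i t = 0 ∧ α j t = 0 then μ₀ i j + s t * μ₁ i j
      else μ₁ i j) i = koszulComb s T (fun i => α i - Pi.single t 1) μ₁ i := by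
  refine Finset.sum_congr rfl fun j _ => ?_
  simp only [hi, false_and, and_false, if_false, sup_tsub_tsub_single hi]

theorem koszulComb_ite_of_eq_zero (s : κ → R) (T : Finset ι) (α : ι → κ → ℕ) {t : κ}
    (μ₀ μ₁ : ι → ι → R) {i : ι} (hi : α i t = 0) :
    koszulComb s T α (fun i j => if α i t = 0 ∧ α j t = 0 then μ₀ i j + s t * μ₁ i j
      else μ₁ i j) i = koszulComb s (T.filter (α · t = 0)) α μ₀ i
        + s t * koszulComb s T (fun i => α i - Pi.single t 1) μ₁ i := by
  rw [koszulComb, koszulComb, koszulComb, Finset.sum_filter, Finset.mul_sum,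
    ← Finset.sum_add_distrib]
  refine Finset.sum_congr rfl fun j _ => ?_
  by_cases hj : α j t = 0
  · simp only [hi, hj, and_self, if_true, tsub_single_eq_self hi, tsub_single_eq_self hj]
    ring
  · simp only [hi, hj, and_false, false_and, if_false,
      sup_tsub_eq_sup_tsub_tsub_single_add hi hj, sMon_add, sMon_single]
    ring

theorem sum_filter_mul_sMon_mem_span_insert (s : κ → R) {T : Finset ι} {α : ι → κ → ℕ}
    {a : ι → R} {E : Set κ} (t : κ) (h : ∑ i ∈ T, a i * sMon s (α i) ∈ Ideal.span (s '' E)) :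
    ∑ i ∈ T with α i t = 0, a i * sMon s (α i) ∈ Ideal.span (s '' insert t E) := by
  rw [eq_sub_of_add_eq (Finset.sum_filter_add_sum_filter_not T (α · t = 0) fun i =>
    a i * sMon s (α i))]
  refine sub_mem (Ideal.span_mono (Set.image_mono (Set.subset_insert t E)) h)
    (Ideal.sum_mem _ fun i hi => ?_)
  rw [sMon_eq_mul_sMon_tsub_single s (Finset.mem_filter.mp hi).2, mul_left_comm]
  exact Ideal.mul_mem_right _ _ (Ideal.subset_span ⟨t, Set.mem_insert t E, rfl⟩)

end Koszul

section Syzygy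

variable {R : Type*} [CommRing R]

def IsWeakRegularModSubsets {κ : Type*} (s : κ → R) : Prop :=
  ∀ (E : Set κ) (t : κ), t ∉ E → ∀ x : R, s t * x ∈ Ideal.span (s '' E) → x ∈ Ideal.span (s '' E)

theorem exists_perm_apply_eq_and_image_Iio {k : ℕ} (E : Set (Fin k)) {t : Fin k} (ht : t ∉ E) :
    ∃ (σ : Equiv.Perm (Fin k)) (i : Fin k), σ i = t ∧ σ '' Set.Iio i = E := by
  classical
  set i : Fin k := ⟨Fintype.card E, by simpa using Fintype.card_subtype_lt ht⟩
  obtain ⟨e⟩ : Nonempty ({j : Fin k // j < i} ≃ E) :=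
    Fintype.card_eq.mp (by simp [Fintype.card_subtype, Finset.filter_gt_eq_Iio, i])
  have himage : e.extendSubtype '' Set.Iio i = E := by
    ext x
    refine ⟨?_, fun hx => ⟨e.symm ⟨x, hx⟩, (e.symm ⟨x, hx⟩).2, ?_⟩⟩
    · rintro ⟨j, hj, rfl⟩
      exact e.extendSubtype_mem j hj
    · simp [e.extendSubtype_apply_of_mem _ (e.symm ⟨x, hx⟩).2]
  have hi : e.extendSubtype i ∉ E := e.extendSubtype_not_mem i (lt_irrefl i)
  refine ⟨e.extendSubtype.trans (Equiv.swap (e.extendSubtype i) t), i, by simp, ?_⟩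
  rw [Equiv.coe_trans, Set.image_comp, himage]
  refine (Set.image_congr fun x hx => Equiv.swap_apply_of_ne_of_ne ?_ ?_).trans (Set.image_id E)
  · rintro rfl; exact hi hx
  · rintro rfl; exact ht hx

theorem IsPermutableWeakRegularSeq.isWeakRegularModSubsets {k : ℕ} {s : Fin k → R}
    (hs : IsPermutableWeakRegularSeq s) : IsWeakRegularModSubsets s := by
  intro E t ht x hx
  obtain ⟨σ, i, rfl, hσ⟩ := exists_perm_apply_eq_and_image_Iio E ht
  have hsσ : (s ∘ σ) '' {j | j < i} = s '' E := by rw [Set.image_comp]; exact congrArg _ hσ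
  exact hsσ ▸ hs.2 σ i x (hsσ ▸ hx)

variable {κ : Type*} [Fintype κ] {ι : Type*}

theorem exists_koszulComb_sub_mem {s : κ → R} (hs : IsWeakRegularModSubsets s) (T : Finset ι)
    (α : ι → κ → ℕ) (a : ι → R) (E : Set κ) (hαE : ∀ i ∈ T, ∀ v ∈ E, α i v = 0)
    (h : ∑ i ∈ T, a i * sMon s (α i) ∈ Ideal.span (s '' E)) :
    ∃ μ, ∀ i ∈ T, a i - koszulComb s T α μ i ∈ Ideal.span (s '' E) := by
  classical
  by_cases hzero : ∀ i ∈ T, α i = 0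
  · refine exists_koszulComb_of_forall_eq_zero s hzero ?_
    rwa [Finset.sum_congr rfl fun i hi => by rw [hzero i hi, sMon_zero, mul_one]] at h
  obtain ⟨i₁, hi₁, t, ht⟩ : ∃ i₁ ∈ T, ∃ t, α i₁ t ≠ 0 := by
    by_contra! hne
    exact hzero fun i hi => funext (hne i hi)
  have htE : t ∉ E := fun htE => ht (hαE i₁ hi₁ t htE)
  set J := Ideal.span (s '' E)
  -- First solve the syzygy of the monomials not divisible by `s t`, modulo `J + (s t)`.
  obtain ⟨μ₀, hμ₀⟩ := exists_koszulComb_sub_mem hs (T.filter (α · t = 0)) α a (insert t E)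
    (fun i hi v hv => by
      rcases hv with rfl | hv
      · exact (Finset.mem_filter.mp hi).2
      · exact hαE i (Finset.mem_filter.mp hi).1 v hv)
    (sum_filter_mul_sMon_mem_span_insert s t h)
  have hy : ∀ i ∈ T.filter (α · t = 0), ∃ y,
      a i - koszulComb s (T.filter (α · t = 0)) α μ₀ i - s t * y ∈ J := fun i hi => by
    obtain ⟨y, z, hz, hyz⟩ := Ideal.mem_span_insert.mp (Set.image_insert_eq (f := s) ▸ hμ₀ i hi)
    exact ⟨y, by rw [hyz]; simpa [mul_comm] using hz⟩
  choose! y hy using hy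
  -- Then divide what is left by `s t`.
  have h₁ : ∑ i ∈ T, (if α i t = 0 then y i else a i) * sMon s (α i - Pi.single t 1) ∈ J := by
    refine hs E t htE _ ?_
    rw [mul_sum_ite_mul_sMon_tsub_single]
    refine J.sub_mem h ?_
    have := J.sum_mem fun i hi => J.mul_mem_right (sMon s (α i)) (hy i hi)
    simpa [sub_mul, Finset.sum_sub_distrib, sum_koszulComb_mul_sMon] using this
  obtain ⟨μ₁, hμ₁⟩ := exists_koszulComb_sub_mem hs T (fun i => α i - Pi.single t 1) _ E
    (fun i hi v hv => by simp [hαE i hi v hv]) h₁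
  refine ⟨fun i j => if α i t = 0 ∧ α j t = 0 then μ₀ i j + s t * μ₁ i j else μ₁ i j,
    fun i hi => ?_⟩
  by_cases hit : α i t = 0
  · rw [koszulComb_ite_of_eq_zero s T α μ₀ μ₁ hit]
    have := J.add_mem (hy i (Finset.mem_filter.mpr ⟨hi, hit⟩)) (J.mul_mem_left (s t) (hμ₁ i hi))
    simp only [hit, if_true] at this
    convert this using 1
    ring
  · rw [koszulComb_ite_of_ne s T α μ₀ μ₁ hit]
    simpa [hit] using hμ₁ i hi
termination_by ∑ i ∈ T, ∑ v, α i v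
decreasing_by
  · exact sum_sum_filter_lt hi₁ ht
  · classical exact sum_sum_tsub_single_lt hi₁ ht

end Syzygy

section StdSpan

variable {σ : Type*} {R : Type*} [CommRing R] (m : MonomialOrder σ) {ι : Type*} [Fintype ι]

/-- For `S = Iic (toSyn (deg g))`, membership of `g` is a standard representation
`g = ∑ qᵢ fᵢ` (all `deg qᵢ + deg fᵢ ≼ deg g`); imposing the bound on every monomial of `qᵢ`
rather than on `deg qᵢ` makes this a submodule. -/
def stdSpan (f : ι → MvPolynomial σ R) (S : Set m.syn) : Submodule R (MvPolynomial σ R) where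
  carrier := {g | ∃ q : ι → MvPolynomial σ R, g = ∑ i, q i * f i ∧
    ∀ i, ∀ a ∈ (q i).support, m.toSyn (a + m.degree (f i)) ∈ S}
  add_mem' := by
    classical
    rintro _ _ ⟨q, rfl, hq⟩ ⟨q', rfl, hq'⟩
    refine ⟨q + q', by simp [add_mul, Finset.sum_add_distrib], fun i a ha => ?_⟩
    rcases Finset.mem_union.mp (support_add ha) with ha | ha
    exacts [hq i a ha, hq' i a ha]
  zero_mem' := ⟨0, by simp, by simp⟩
  smul_mem' := by
    rintro r _ ⟨q, rfl, hq⟩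
    exact ⟨r • q, by simp [Finset.smul_sum], fun i a ha => hq i a (support_smul ha)⟩

variable {m} {f : ι → MvPolynomial σ R}

theorem stdSpan_mono {S S' : Set m.syn} (h : S ⊆ S') : stdSpan m f S ≤ stdSpan m f S' := by
  rintro _ ⟨q, rfl, hq⟩
  exact ⟨q, rfl, fun i a ha => h (hq i a ha)⟩

theorem mul_mem_stdSpan {S : Set m.syn} {q : MvPolynomial σ R} (i : ι)
    (hq : ∀ a ∈ q.support, m.toSyn (a + m.degree (f i)) ∈ S) : q * f i ∈ stdSpan m f S := by
  classical
  refine ⟨Pi.single i q, by simp [Pi.single_apply], fun j a ha => ?_⟩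
  by_cases hj : j = i
  · subst hj; exact hq a (by simpa using ha)
  · simp [hj] at ha

theorem monomial_mul_mem_stdSpan {S S' : Set m.syn} {g : MvPolynomial σ R}
    (hg : g ∈ stdSpan m f S) (d : σ →₀ ℕ) (r : R) (h : ∀ x ∈ S, m.toSyn d + x ∈ S') :
    monomial d r * g ∈ stdSpan m f S' := by
  obtain ⟨q, rfl, hq⟩ := hg
  refine ⟨fun i => monomial d r * q i, by simp [Finset.mul_sum, mul_assoc], fun i a ha => ?_⟩
  rw [mem_support_iff, coeff_monomial_mul'] at ha
  split_ifs at ha with hda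
  · rw [← tsub_add_cancel_of_le hda, add_comm _ d, add_assoc, map_add]
    exact h _ (hq i _ (mem_support_iff.mpr (right_ne_zero_of_mul ha)))
  · exact absurd rfl ha

theorem monomial_tsub_mul_mem_stdSpan_Iic {e : σ →₀ ℕ} {i : ι} (h : m.degree (f i) ≤ e) (r : R) :
    monomial (e - m.degree (f i)) r * f i ∈ stdSpan m f (Set.Iic (m.toSyn e)) :=
  mul_mem_stdSpan i fun a ha => by
    rw [Finset.mem_singleton.mp (support_monomial_subset ha), tsub_add_cancel_of_le h]
    exact le_rfl

theorem exists_le_of_mem_support_of_mem_stdSpan {S : Set m.syn} {g : MvPolynomial σ R}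
    (hg : g ∈ stdSpan m f S) {b : σ →₀ ℕ} (hb : b ∈ g.support) : ∃ x ∈ S, m.toSyn b ≤ x := by
  classical
  obtain ⟨q, rfl, hq⟩ := hg
  obtain ⟨i, -, hi⟩ := Finset.mem_biUnion.mp (support_sum hb)
  obtain ⟨a, ha, b', hb', rfl⟩ := Finset.mem_add.mp (support_mul _ _ hi)
  refine ⟨_, hq i a ha, ?_⟩
  rw [map_add, map_add]
  gcongr
  exact m.le_degree hb'

theorem degree_le_of_mem_stdSpan_Iic {e : m.syn} {g : MvPolynomial σ R}
    (hg : g ∈ stdSpan m f (Set.Iic e)) : m.toSyn (m.degree g) ≤ e := by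
  by_cases hg0 : g = 0
  · simp [hg0]
  obtain ⟨x, hx, hle⟩ := exists_le_of_mem_support_of_mem_stdSpan hg (m.degree_mem_support hg0)
  exact hle.trans hx

theorem coeff_eq_zero_of_mem_stdSpan_Iio {e : σ →₀ ℕ} {g : MvPolynomial σ R}
    (hg : g ∈ stdSpan m f (Set.Iio (m.toSyn e))) : g.coeff e = 0 := by
  by_contra he
  obtain ⟨x, hx, hle⟩ := exists_le_of_mem_support_of_mem_stdSpan hg (mem_support_iff.mpr he)
  exact (hle.trans_lt hx).false

theorem sum_mul_mem_stdSpan_Iic_sup (q : ι → MvPolynomial σ R) :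
    ∑ i, q i * f i ∈ stdSpan m f (Set.Iic
      (Finset.univ.sup fun i => (q i).support.sup fun a => m.toSyn (a + m.degree (f i)))) :=
  ⟨q, rfl, fun i _ ha => Finset.le_sup_of_le (Finset.mem_univ i)
    (Finset.le_sup (f := fun a => m.toSyn (a + m.degree (f i))) ha)⟩

theorem exists_mem_stdSpan_Iic {g : MvPolynomial σ R} (hg : g ∈ Ideal.span (Set.range f)) :
    ∃ e, g ∈ stdSpan m f (Set.Iic e) := by
  obtain ⟨q, rfl⟩ := Ideal.mem_span_range_iff_exists_fun.mp hg
  exact ⟨_, sum_mul_mem_stdSpan_Iic_sup q⟩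

theorem exists_lt_mem_stdSpan_Iic {e : m.syn} (he : ⊥ < e) {g : MvPolynomial σ R}
    (hg : g ∈ stdSpan m f (Set.Iio e)) : ∃ e' < e, g ∈ stdSpan m f (Set.Iic e') := by
  obtain ⟨q, rfl, hq⟩ := hg
  exact ⟨_, (Finset.sup_lt_iff he).mpr fun i _ => (Finset.sup_lt_iff he).mpr (hq i),
    sum_mul_mem_stdSpan_Iic_sup q⟩

theorem toSyn_degree_lt_of_coeff_eq_zero {g : MvPolynomial σ R} {e : σ →₀ ℕ}
    (hle : m.toSyn (m.degree g) ≤ m.toSyn e) (he : g.coeff e = 0) (hg : g ≠ 0) :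
    m.toSyn (m.degree g) < m.toSyn e :=
  hle.lt_of_ne fun h => hg <| m.leadingCoeff_eq_zero_iff.mp <| by
    rwa [MonomialOrder.leadingCoeff, m.toSyn.injective h]

theorem coeff_monomial_tsub_mul {d e : σ →₀ ℕ} (hd : d ≤ e) (c : R) (p : MvPolynomial σ R) :
    (monomial (e - d) c * p).coeff e = c * p.coeff d := by
  rw [coeff_monomial_mul', if_pos tsub_le_self, tsub_tsub_cancel_of_le hd]

variable {q : ι → MvPolynomial σ R} {e : σ →₀ ℕ}

theorem coeff_tsub_eq_zero_of_not_le {p : MvPolynomial σ R} {d : σ →₀ ℕ}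
    (hp : ∀ a ∈ p.support, m.toSyn (a + d) ≤ m.toSyn e) (hd : ¬ d ≤ e) : p.coeff (e - d) = 0 := by
  by_contra h
  refine hd (le_of_le_of_eq le_add_self (?_ : e - d + d = e))
  by_contra hne
  exact (hp _ (mem_support_iff.mpr h)).not_gt
    (m.toSyn_strictMono (lt_of_le_of_ne le_tsub_add (Ne.symm hne)))

theorem sum_sub_monomial_mul_mem_stdSpan_Iio
    (hq : ∀ i, ∀ a ∈ (q i).support, m.toSyn (a + m.degree (f i)) ≤ m.toSyn e) :
    ∑ i, (q i - monomial (e - m.degree (f i)) ((q i).coeff (e - m.degree (f i)))) * f i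
      ∈ stdSpan m f (Set.Iio (m.toSyn e)) := by
  classical
  refine ⟨_, rfl, fun i a ha => ?_⟩
  rw [mem_support_iff, coeff_sub, coeff_monomial] at ha
  have hne : e - m.degree (f i) ≠ a := by rintro rfl; simp at ha
  rw [if_neg hne, sub_zero, ← mem_support_iff] at ha
  refine (hq i a ha).lt_of_ne fun h => hne ?_
  rw [← m.toSyn.injective h, add_tsub_cancel_right]

theorem sum_mul_eq_sum_sub_monomial_mul_add
    (hq : ∀ i, ∀ a ∈ (q i).support, m.toSyn (a + m.degree (f i)) ≤ m.toSyn e) :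
    ∑ i, q i * f i =
      ∑ i, (q i - monomial (e - m.degree (f i)) ((q i).coeff (e - m.degree (f i)))) * f i
      + ∑ i with m.degree (f i) ≤ e,
          monomial (e - m.degree (f i)) ((q i).coeff (e - m.degree (f i))) * f i := by
  rw [Finset.sum_filter, ← Finset.sum_add_distrib]
  refine Finset.sum_congr rfl fun i _ => ?_
  split_ifs with hd
  · ring
  · rw [coeff_tsub_eq_zero_of_not_le (hq i) hd, map_zero]; ring

theorem coeff_sum_mul_eq_sum
    (hq : ∀ i, ∀ a ∈ (q i).support, m.toSyn (a + m.degree (f i)) ≤ m.toSyn e) :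
    (∑ i, q i * f i).coeff e =
      ∑ i with m.degree (f i) ≤ e, (q i).coeff (e - m.degree (f i)) * m.leadingCoeff (f i) := by
  rw [sum_mul_eq_sum_sub_monomial_mul_add hq, coeff_add,
    coeff_eq_zero_of_mem_stdSpan_Iio (sum_sub_monomial_mul_mem_stdSpan_Iio hq), zero_add, coeff_sum]
  exact Finset.sum_congr rfl fun i hi => coeff_monomial_tsub_mul (Finset.mem_filter.mp hi).2 _ _

theorem leadingTerm_mem_span_of_mem_stdSpan {g : MvPolynomial σ R}
    (hg : g ∈ stdSpan m f (Set.Iic (m.toSyn (m.degree g)))) :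
    m.leadingTerm g ∈ Ideal.span (Set.range fun i => m.leadingTerm (f i)) := by
  obtain ⟨q, hgq, hq⟩ := hg
  have hcoeff := coeff_sum_mul_eq_sum hq
  rw [← hgq] at hcoeff
  rw [MonomialOrder.leadingTerm, MonomialOrder.leadingCoeff, hcoeff, map_sum]
  refine Ideal.sum_mem _ fun i hi => ?_
  have hterm : monomial (m.degree g) ((q i).coeff (m.degree g - m.degree (f i))
      * m.leadingCoeff (f i)) = monomial (m.degree g - m.degree (f i))
        ((q i).coeff (m.degree g - m.degree (f i))) * m.leadingTerm (f i) := by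
    rw [MonomialOrder.leadingTerm, monomial_mul, tsub_add_cancel_of_le (Finset.mem_filter.mp hi).2]
  rw [hterm]
  exact Ideal.mul_mem_left _ _ (Ideal.subset_span ⟨i, rfl⟩)

theorem exists_eq_sum_of_monomial_mem_span {d : ι → σ →₀ ℕ} {r : ι → R} {c : R}
    (h : monomial e c ∈ Ideal.span (Set.range fun i => monomial (d i) (r i))) :
    ∃ b : ι → R, c = ∑ i with d i ≤ e, b i * r i := by
  classical
  obtain ⟨p, hp⟩ := Ideal.mem_span_range_iff_exists_fun.mp h
  refine ⟨fun i => (p i).coeff (e - d i), ?_⟩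
  have hcoeff := congrArg (coeff e) hp
  rw [coeff_monomial, if_pos rfl, coeff_sum] at hcoeff
  rw [← hcoeff, Finset.sum_filter]
  exact Finset.sum_congr rfl fun i _ => coeff_mul_monomial' _ _ _ _

theorem mem_stdSpan_of_leadingTerm_mem_span {I : Ideal (MvPolynomial σ R)} (hfI : ∀ i, f i ∈ I)
    (hLT : ∀ g ∈ I, m.leadingTerm g ∈ Ideal.span (Set.range fun i => m.leadingTerm (f i)))
    {g : MvPolynomial σ R} (hg : g ∈ I) : g ∈ stdSpan m f (Set.Iic (m.toSyn (m.degree g))) := by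
  classical
  induction hdeg : m.toSyn (m.degree g) using WellFoundedLT.induction generalizing g with
  | _ e ih =>
  obtain ⟨b, hb⟩ := exists_eq_sum_of_monomial_mem_span (hLT g hg)
  set h := ∑ i with m.degree (f i) ≤ m.degree g, monomial (m.degree g - m.degree (f i)) (b i) * f i
  have hh : h ∈ stdSpan m f (Set.Iic e) := hdeg ▸ Submodule.sum_mem _ fun i hi =>
    monomial_tsub_mul_mem_stdSpan_Iic (Finset.mem_filter.mp hi).2 _
  suffices g - h ∈ stdSpan m f (Set.Iic e) by simpa using add_mem this hh
  by_cases hgh : g - h = 0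
  · simp [hgh]
  have hcoeff : (g - h).coeff (m.degree g) = 0 := by
    rw [coeff_sub, coeff_sum, Finset.sum_congr rfl fun i hi =>
      coeff_monomial_tsub_mul (Finset.mem_filter.mp hi).2 _ _]
    exact sub_eq_zero.mpr hb
  have hlt := toSyn_degree_lt_of_coeff_eq_zero (m.degree_sub_le.trans
    (sup_le le_rfl ((degree_le_of_mem_stdSpan_Iic hh).trans hdeg.ge))) hcoeff hgh
  rw [hdeg] at hlt
  refine stdSpan_mono (Set.Iic_subset_Iic.mpr hlt.le) (ih _ hlt (I.sub_mem hg ?_) rfl)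
  exact I.sum_mem fun i _ => I.mul_mem_left _ (hfI i)

end StdSpan

section SPoly

variable {n k M : ℕ} {R : Type*} [CommRing R] {m : MonomialOrder (Fin n)} {s : Fin k → R}
  {f : Fin M → MvPolynomial (Fin n) R} {c : Fin M → Rˣ} {α : Fin M → Fin k → ℕ}

theorem reducesToZero_iff_mem_stdSpan {g : MvPolynomial (Fin n) R} :
    ReducesToZero m f g ↔ g ∈ stdSpan m f (Set.Iic (m.toSyn (m.degree g))) := by
  classical
  constructor
  · rintro ⟨p, rfl, hp⟩
    refine ⟨fun i => if p i * f i = 0 then 0 else p i, ?_, fun i a ha => ?_⟩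
    · exact Finset.sum_congr rfl fun i _ => by dsimp only; split_ifs with h <;> simp [h]
    · dsimp only at ha
      split_ifs at ha with h
      · simp at ha
      · have hpi := hp i h
        rw [map_add] at hpi
        rw [Set.mem_Iic, map_add]
        exact (add_le_add_left (m.le_degree ha) _).trans hpi
  · rintro ⟨q, rfl, hq⟩
    exact ⟨q, rfl, fun i hi => hq i _ (m.degree_mem_support (left_ne_zero_of_mul hi))⟩

theorem sMonSPoly_eq (i j : Fin M) :
    sMonSPoly m s f c α i j =
      monomial (m.degree (f i) ⊔ m.degree (f j) - m.degree (f i))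
        (↑(c i)⁻¹ * sMon s (α i ⊔ α j - α i)) * f i
      - monomial (m.degree (f i) ⊔ m.degree (f j) - m.degree (f j))
        (↑(c j)⁻¹ * sMon s (α j ⊔ α i - α j)) * f j := by
  rw [sup_comm (α j)]
  rfl

theorem sMonSPoly_self (i : Fin M) : sMonSPoly m s f c α i i = 0 := sub_self _

theorem sMonSPoly_swap (i j : Fin M) :
    sMonSPoly m s f c α j i = -sMonSPoly m s f c α i j := by
  rw [sMonSPoly_eq, sMonSPoly_eq, sup_comm (m.degree (f j)), neg_sub]

theorem mem_stdSpan_sMonSPoly_of_reducesToZero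
    (hred : ∀ i j, i < j → ReducesToZero m f (sMonSPoly m s f c α i j)) (i j : Fin M) :
    sMonSPoly m s f c α i j ∈
      stdSpan m f (Set.Iic (m.toSyn (m.degree (sMonSPoly m s f c α i j)))) := by
  rcases lt_trichotomy i j with h | rfl | h
  · exact reducesToZero_iff_mem_stdSpan.mp (hred i j h)
  · rw [sMonSPoly_self]
    exact zero_mem _
  · rw [sMonSPoly_swap, m.degree_neg]
    exact neg_mem (reducesToZero_iff_mem_stdSpan.mp (hred j i h))

theorem monomial_mul_sMonSPoly {i j : Fin M} {e : Fin n →₀ ℕ}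
    (h : m.degree (f i) ⊔ m.degree (f j) ≤ e) :
    monomial (e - m.degree (f i) ⊔ m.degree (f j)) 1 * sMonSPoly m s f c α i j =
      monomial (e - m.degree (f i)) (↑(c i)⁻¹ * sMon s (α i ⊔ α j - α i)) * f i
      - monomial (e - m.degree (f j)) (↑(c j)⁻¹ * sMon s (α j ⊔ α i - α j)) * f j := by
  rw [sMonSPoly_eq, mul_sub, ← mul_assoc, ← mul_assoc, monomial_mul, monomial_mul, one_mul,
    one_mul, tsub_add_tsub_cancel h le_sup_left, tsub_add_tsub_cancel h le_sup_right]

theorem sum_monomial_koszulComb_mul_eq (T : Finset (Fin M)) (μ : Fin M → Fin M → R)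
    {e : Fin n →₀ ℕ} (hT : ∀ i ∈ T, m.degree (f i) ≤ e) :
    ∑ i ∈ T, monomial (e - m.degree (f i)) (↑(c i)⁻¹ * koszulComb s T α μ i) * f i =
      ∑ i ∈ T, ∑ j ∈ T, μ i j •
        (monomial (e - m.degree (f i) ⊔ m.degree (f j)) 1 * sMonSPoly m s f c α i j) := by
  rw [Finset.sum_congr rfl fun i hi => Finset.sum_congr rfl fun j hj => by
    rw [monomial_mul_sMonSPoly (sup_le (hT i hi) (hT j hj))], ← sum_sum_sub_swap_smul]
  refine Finset.sum_congr rfl fun i _ => ?_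
  rw [koszulComb, Finset.mul_sum, map_sum, Finset.sum_mul]
  refine Finset.sum_congr rfl fun j _ => ?_
  rw [← smul_mul_assoc, smul_monomial, smul_eq_mul, mul_left_comm]

variable (hlc : ∀ i, m.leadingCoeff (f i) = c i * sMon s (α i))
include hlc

theorem coeff_sup_sMonSPoly (i j : Fin M) :
    (sMonSPoly m s f c α i j).coeff (m.degree (f i) ⊔ m.degree (f j)) = 0 := by
  have key : ∀ i j, ↑(c i)⁻¹ * sMon s (α i ⊔ α j - α i) * (f i).coeff (m.degree (f i))
      = sMon s (α i ⊔ α j) := fun i j => by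
    rw [← MonomialOrder.leadingCoeff, hlc, mul_mul_mul_comm, Units.inv_mul, one_mul,
      sMon_tsub_mul s le_sup_left]
  rw [sMonSPoly_eq, coeff_sub, coeff_monomial_tsub_mul le_sup_left,
    coeff_monomial_tsub_mul le_sup_right, key, key, sup_comm (α j), sub_self]

theorem sMonSPoly_mem_stdSpan_Iio {i j : Fin M}
    (hS : sMonSPoly m s f c α i j ∈
      stdSpan m f (Set.Iic (m.toSyn (m.degree (sMonSPoly m s f c α i j))))) :
    sMonSPoly m s f c α i j ∈
      stdSpan m f (Set.Iio (m.toSyn (m.degree (f i) ⊔ m.degree (f j)))) := by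
  by_cases h0 : sMonSPoly m s f c α i j = 0
  · rw [h0]; exact zero_mem _
  have hle : sMonSPoly m s f c α i j ∈
      stdSpan m f (Set.Iic (m.toSyn (m.degree (f i) ⊔ m.degree (f j)))) := by
    rw [sMonSPoly_eq]
    exact sub_mem (monomial_tsub_mul_mem_stdSpan_Iic le_sup_left _)
      (monomial_tsub_mul_mem_stdSpan_Iic le_sup_right _)
  exact stdSpan_mono (Set.Iic_subset_Iio.mpr (toSyn_degree_lt_of_coeff_eq_zero
    (degree_le_of_mem_stdSpan_Iic hle) (coeff_sup_sMonSPoly hlc i j) h0)) hS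

theorem mem_stdSpan_Iio_of_coeff_eq_zero (hs : IsWeakRegularModSubsets s)
    (hS : ∀ i j, sMonSPoly m s f c α i j ∈
      stdSpan m f (Set.Iic (m.toSyn (m.degree (sMonSPoly m s f c α i j)))))
    {g : MvPolynomial (Fin n) R} {e : Fin n →₀ ℕ} (hg : g ∈ stdSpan m f (Set.Iic (m.toSyn e)))
    (he : g.coeff e = 0) : g ∈ stdSpan m f (Set.Iio (m.toSyn e)) := by
  classical
  obtain ⟨q, rfl, hq⟩ := hg
  set T := Finset.univ.filter fun i => m.degree (f i) ≤ e
  rw [sum_mul_eq_sum_sub_monomial_mul_add hq]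
  refine add_mem (sum_sub_monomial_mul_mem_stdSpan_Iio hq) ?_
  have hsyz : ∑ i ∈ T, ((q i).coeff (e - m.degree (f i)) * c i) * sMon s (α i)
      ∈ Ideal.span (s '' ∅) := by
    rw [Set.image_empty, Ideal.span_empty, Ideal.mem_bot, ← he, coeff_sum_mul_eq_sum hq]
    exact Finset.sum_congr rfl fun i _ => by rw [hlc, mul_assoc]
  obtain ⟨μ, hμ⟩ := exists_koszulComb_sub_mem hs T α _ ∅ (by simp) hsyz
  have hb : ∀ i ∈ T, (q i).coeff (e - m.degree (f i)) = ↑(c i)⁻¹ * koszulComb s T α μ i := by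
    intro i hi
    have := hμ i hi
    rw [Set.image_empty, Ideal.span_empty, Ideal.mem_bot, sub_eq_zero] at this
    rw [← this, mul_comm, mul_assoc, Units.mul_inv, mul_one]
  rw [Finset.sum_congr rfl fun i hi => by rw [hb i hi],
    sum_monomial_koszulComb_mul_eq T μ fun i hi => (Finset.mem_filter.mp hi).2]
  refine Submodule.sum_mem _ fun i hi => Submodule.sum_mem _ fun j hj =>
    Submodule.smul_mem _ _ (monomial_mul_mem_stdSpan (sMonSPoly_mem_stdSpan_Iio hlc (hS i j)) _ _
      fun x hx => ?_)
  calc _ < m.toSyn (e - m.degree (f i) ⊔ m.degree (f j))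
          + m.toSyn (m.degree (f i) ⊔ m.degree (f j)) := (add_lt_add_iff_left _).mpr hx
    _ = m.toSyn e := by
      rw [← map_add, tsub_add_cancel_of_le (sup_le (Finset.mem_filter.mp hi).2
        (Finset.mem_filter.mp hj).2)]

theorem mem_stdSpan_Iic_degree_of_sMonSPoly (hs : IsWeakRegularModSubsets s)
    (hS : ∀ i j, sMonSPoly m s f c α i j ∈
      stdSpan m f (Set.Iic (m.toSyn (m.degree (sMonSPoly m s f c α i j)))))
    {g : MvPolynomial (Fin n) R} (hg : g ∈ Ideal.span (Set.range f)) :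
    g ∈ stdSpan m f (Set.Iic (m.toSyn (m.degree g))) := by
  obtain ⟨e, he⟩ := exists_mem_stdSpan_Iic hg
  induction e using WellFoundedLT.induction with
  | _ e ih =>
  by_cases hle : e ≤ m.toSyn (m.degree g)
  · exact stdSpan_mono (Set.Iic_subset_Iic.mpr hle) he
  rw [not_le] at hle
  have hlow := mem_stdSpan_Iio_of_coeff_eq_zero hlc hs hS (e := m.toSyn.symm e) (by simpa using he)
    (m.coeff_eq_zero_of_lt (by simpa using hle))
  obtain ⟨e', he', hg'⟩ := exists_lt_mem_stdSpan_Iic (bot_le.trans_lt hle) (by simpa using hlow)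
  exact ih e' he' hg'

end SPoly

end PaperGB

/-- Buchberger's criterion for `s`-monomial type polynomials. -/
theorem buchberger_criterion_sMonomialType
    {n : ℕ} {R : Type*} [CommRing R] (m : MonomialOrder (Fin n))
    {k : ℕ} (s : Fin k → R) (hs : IsPermutableWeakRegularSeq s)
    {M : ℕ} (f : Fin M → MvPolynomial (Fin n) R) (hf : ∀ i, f i ≠ 0)
    (c : Fin M → Rˣ) (α : Fin M → Fin k → ℕ)
    (hlc : ∀ i, mLC m (f i) = ↑(c i) * ∏ t, s t ^ α i t) :
    IsGroebnerBasis m (Ideal.span (Set.range f)) f ↔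
      ∀ i j : Fin M, i < j → ReducesToZero m f (sMonSPoly m s f c α i j) := by
  have hfI : ∀ i, f i ∈ Ideal.span (Set.range f) := fun i => Ideal.subset_span ⟨i, rfl⟩
  constructor
  · rintro ⟨-, -, hspan⟩ i j -
    refine reducesToZero_iff_mem_stdSpan.mpr (mem_stdSpan_of_leadingTerm_mem_span hfI
      (fun g hg => ?_) (sub_mem (Ideal.mul_mem_left _ _ (hfI i)) (Ideal.mul_mem_left _ _ (hfI j))))
    by_cases hg0 : g = 0
    · simp [hg0]
    · exact hspan ▸ Ideal.subset_span ⟨g, ⟨hg, hg0⟩, rfl⟩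
  · intro hred
    refine ⟨hf, hfI, le_antisymm (Ideal.span_le.mpr ?_) (Ideal.span_le.mpr ?_)⟩
    · rintro _ ⟨i, rfl⟩
      exact Ideal.subset_span ⟨f i, ⟨hfI i, hf i⟩, rfl⟩
    · rintro _ ⟨g, ⟨hg, -⟩, rfl⟩
      exact leadingTerm_mem_span_of_mem_stdSpan (mem_stdSpan_Iic_degree_of_sMonSPoly hlc
        hs.isWeakRegularModSubsets (mem_stdSpan_sMonSPoly_of_reducesToZero hred) hg)
end

section
/- Let R be a principal ideal domain, S = R[x_1,…,x_n] with a fixed monomial order, and let f_1,…,f_m ∈ S be nonzero polynomials all having the same degree δ ∈ ℕ^n (i.e., deg(f_i) = δ for all i). Let c_1,…,c_m ∈ R and suppose that the sum g = c_1f_1+⋯+c_mf_m is either zero or satisfies deg(g) ≺ δ. Then, for any fixed choices of least common multiples, g lies in the R-span (inside S) of the elements S_R(f_i,f_j) for 1 ≤ i < j ≤ m; moreover each S_R(f_i,f_j) is either zero or satisfies deg(S_R(f_i,f_j)) ≺ δ. -/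
open MvPolynomial
open scoped MonomialOrder

open PaperGB

/-- `l` is a least common multiple of `a` and `b`, with cofactors `qa`, `qb`. -/
def IsLcmChoice {R : Type*} [CommRing R] (a b l qa qb : R) : Prop :=
  l = a * qa ∧ l = b * qb ∧ ∀ c, a ∣ c → b ∣ c → l ∣ c

/-- The `S_R`-polynomial of `f i` and `f j`, built from cofactor data `u i j`, `v i j`
(so that `lcm (lc (f i)) (lc (f j)) = lc (f i) * u i j = lc (f j) * v i j`). -/
noncomputable def sPolyPID {n : ℕ} {R : Type*} [CommRing R] (m : MonomialOrder (Fin n))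
    {M : ℕ} (f : Fin M → MvPolynomial (Fin n) R) (u v : Fin M → Fin M → R) (i j : Fin M) :
    MvPolynomial (Fin n) R :=
  MvPolynomial.monomial ((mDeg m (f i) ⊔ mDeg m (f j)) - mDeg m (f i)) (u i j) * f i
  - MvPolynomial.monomial ((mDeg m (f i) ⊔ mDeg m (f j)) - mDeg m (f j)) (v i j) * f j


namespace PaperGB

variable {n : ℕ} {R : Type*} [CommSemiring R]

lemma toSyn_mDeg (m : MonomialOrder (Fin n)) (f : MvPolynomial (Fin n) R) :
    m.toSyn (mDeg m f) = f.support.sup fun d => m.toSyn d :=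
  m.toSyn.apply_symm_apply _

lemma le_mDeg {m : MonomialOrder (Fin n)} {f : MvPolynomial (Fin n) R} {d : Fin n →₀ ℕ}
    (hd : d ∈ f.support) : m.toSyn d ≤ m.toSyn (mDeg m f) := by
  rw [toSyn_mDeg]
  exact Finset.le_sup hd

lemma coeff_eq_zero_of_mDeg_lt {m : MonomialOrder (Fin n)} {f : MvPolynomial (Fin n) R}
    {d : Fin n →₀ ℕ} (h : m.toSyn (mDeg m f) < m.toSyn d) : f.coeff d = 0 := by
  by_contra hc
  exact absurd (le_mDeg (by simpa [MvPolynomial.mem_support_iff] using hc)) (not_le.mpr h)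

lemma mDeg_mem_support {m : MonomialOrder (Fin n)} {f : MvPolynomial (Fin n) R}
    (hf : f ≠ 0) : mDeg m f ∈ f.support := by
  obtain ⟨d, hd, hsup⟩ := Finset.exists_mem_eq_sup f.support
    (MvPolynomial.support_nonempty.mpr hf) (fun d => m.toSyn d)
  have : mDeg m f = d := by
    rw [mDeg, hsup, m.toSyn.symm_apply_apply]
  rwa [this]

lemma mLC_ne_zero {m : MonomialOrder (Fin n)} {f : MvPolynomial (Fin n) R}
    (hf : f ≠ 0) : mLC m f ≠ 0 :=
  MvPolynomial.mem_support_iff.mp (mDeg_mem_support hf)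

end PaperGB


theorem syz_lemma {R : Type*} [CommRing R] [IsDomain R] [IsPrincipalIdealRing R]
    {N : Type*} [AddCommGroup N] [Module R N] :
    ∀ (M : ℕ) (a : Fin M → R), (∀ i, a i ≠ 0) →
    ∀ (u v : Fin M → Fin M → R),
    (∀ i j, i < j → a i * u i j = a j * v i j ∧
      ∀ c, a i ∣ c → a j ∣ c → a i * u i j ∣ c) →
    ∀ (c : Fin M → R), (∑ i, c i * a i = 0) →
    ∀ (F : Fin M → N),
    (∑ i, c i • F i) ∈
      Submodule.span R {h | ∃ i j, i < j ∧ h = u i j • F i - v i j • F j} := by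
  intro M
  induction M with
  | zero =>
    intro a ha u v hlcm c hc F
    simp
  | succ M ih =>
    intro a ha u v hlcm c hc F
    have hb : a (Fin.last M) ≠ 0 := ha _
    rw [Fin.sum_univ_castSucc] at hc
    have hlast : c (Fin.last M) * a (Fin.last M)
        = -∑ i : Fin M, c i.castSucc * a i.castSucc := eq_neg_of_add_eq_zero_right hc
    -- c last * a last lies in the ideal generated by the first M coefficients
    have hmem : c (Fin.last M) * a (Fin.last M)
        ∈ Ideal.span (Set.range (fun i : Fin M => a i.castSucc)) := by
      have h1 : c (Fin.last M) * a (Fin.last M)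
          = ∑ i : Fin M, (-(c i.castSucc)) • a i.castSucc := by
        simp only [smul_eq_mul, neg_mul, Finset.sum_neg_distrib, hlast]
      rw [h1]
      exact Submodule.sum_smul_mem _ _ (fun i _ => Ideal.subset_span ⟨i, rfl⟩)
    -- obtain the syzygy coefficients for the last coordinate
    obtain ⟨w, hw⟩ : ∃ w : Fin M → R,
        c (Fin.last M) = ∑ i, w i * v i.castSucc (Fin.last M) := by
      obtain ⟨L, hKL⟩ := (IsPrincipalIdealRing.principal
        (Ideal.span {a (Fin.last M)} ⊓
          Ideal.span (Set.range (fun i : Fin M => a i.castSucc)))).principal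
      rw [Ideal.submodule_span_eq] at hKL
      have hLK : L ∈ Ideal.span {a (Fin.last M)} ⊓
          Ideal.span (Set.range (fun i : Fin M => a i.castSucc)) := by
        rw [hKL]; exact Ideal.mem_span_singleton_self L
      have hLb : a (Fin.last M) ∣ L := Ideal.mem_span_singleton.mp hLK.1
      have hLI : L ∈ Ideal.span (Set.range (fun i : Fin M => a i.castSucc)) := hLK.2
      have hcb : L ∣ c (Fin.last M) * a (Fin.last M) := by
        have h2 : c (Fin.last M) * a (Fin.last M) ∈ Ideal.span {a (Fin.last M)} ⊓
            Ideal.span (Set.range (fun i : Fin M => a i.castSucc)) :=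
          ⟨Ideal.mem_span_singleton.mpr (Dvd.intro_left _ rfl), hmem⟩
        rw [hKL] at h2
        exact Ideal.mem_span_singleton.mp h2
      obtain ⟨t, ht⟩ := hcb
      -- generator of the ideal of the first M coefficients
      obtain ⟨g, hIg⟩ := (IsPrincipalIdealRing.principal
        (Ideal.span (Set.range (fun i : Fin M => a i.castSucc)))).principal
      rw [Ideal.submodule_span_eq] at hIg
      by_cases hg : g = 0
      · have hI0 : Ideal.span (Set.range (fun i : Fin M => a i.castSucc)) = ⊥ := by
          rw [hIg, hg, Ideal.span_singleton_eq_bot]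
        rw [hI0, Ideal.mem_bot] at hmem
        have hc0 : c (Fin.last M) = 0 := by
          rcases mul_eq_zero.mp hmem with h | h
          · exact h
          · exact absurd h hb
        exact ⟨0, by simp [hc0]⟩
      · have hga : ∀ i : Fin M, g ∣ a i.castSucc := fun i =>
          Ideal.mem_span_singleton.mp (hIg ▸ Ideal.subset_span ⟨i, rfl⟩)
        choose a' ha' using hga
        have hgI : g ∈ Ideal.span (Set.range (fun i : Fin M => a i.castSucc)) := by
          rw [hIg]; exact Ideal.mem_span_singleton_self g
        obtain ⟨A, hA⟩ := (Submodule.mem_span_range_iff_exists_fun R).mp hgI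
        -- ∑ A i * a' i = 1
        have hone : ∑ i : Fin M, A i * a' i = 1 := by
          apply mul_left_cancel₀ hg
          rw [mul_one, Finset.mul_sum]
          calc ∑ i : Fin M, g * (A i * a' i)
              = ∑ i : Fin M, A i * a i.castSucc := by
                apply Finset.sum_congr rfl
                intro i _
                rw [ha' i]; ring
            _ = g := by simpa using hA
        -- g divides L
        have hgL : g ∣ L := Ideal.mem_span_singleton.mp (by rw [← hIg]; exact hLI)
        obtain ⟨L', hL'⟩ := hgL
        -- for each i, the lcm of a i.castSucc and a last divides L * a' i
        have hdvd : ∀ i : Fin M,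
            a i.castSucc * u i.castSucc (Fin.last M) ∣ L * a' i := by
          intro i
          refine (hlcm i.castSucc (Fin.last M) (Fin.castSucc_lt_last i)).2 _ ?_ ?_
          · exact ⟨L', by rw [hL', ha' i]; ring⟩
          · exact Dvd.dvd.mul_right hLb (a' i)
        choose s hs using hdvd
        refine ⟨fun i => t * A i * s i, ?_⟩
        apply mul_left_cancel₀ hb
        calc a (Fin.last M) * c (Fin.last M) = L * t := by rw [← ht]; ring
          _ = L * t * 1 := by ring
          _ = L * t * ∑ i : Fin M, A i * a' i := by rw [hone]
          _ = ∑ i : Fin M, t * A i * (L * a' i) := by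
              rw [Finset.mul_sum]; apply Finset.sum_congr rfl; intro i _; ring
          _ = ∑ i : Fin M, t * A i * (a i.castSucc * u i.castSucc (Fin.last M) * s i) := by
              apply Finset.sum_congr rfl; intro i _; rw [← hs i]
          _ = ∑ i : Fin M, t * A i * (a (Fin.last M) * v i.castSucc (Fin.last M) * s i) := by
              apply Finset.sum_congr rfl; intro i _
              rw [(hlcm i.castSucc (Fin.last M) (Fin.castSucc_lt_last i)).1]
          _ = a (Fin.last M) * ∑ i : Fin M, (t * A i * s i) * v i.castSucc (Fin.last M) := by
              rw [Finset.mul_sum]; apply Finset.sum_congr rfl; intro i _; ring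
    -- apply the induction hypothesis to the adjusted coefficients
    set c' : Fin M → R := fun i => c i.castSucc + w i * u i.castSucc (Fin.last M) with hc'
    have hc'0 : ∑ i : Fin M, c' i * a i.castSucc = 0 := by
      have : ∑ i : Fin M, c' i * a i.castSucc
          = ∑ i : Fin M, c i.castSucc * a i.castSucc
            + ∑ i : Fin M, w i * (a i.castSucc * u i.castSucc (Fin.last M)) := by
        rw [← Finset.sum_add_distrib]
        apply Finset.sum_congr rfl; intro i _; simp only [hc']; ring
      rw [this]
      have h3 : ∑ i : Fin M, w i * (a i.castSucc * u i.castSucc (Fin.last M))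
          = c (Fin.last M) * a (Fin.last M) := by
        calc ∑ i : Fin M, w i * (a i.castSucc * u i.castSucc (Fin.last M))
            = ∑ i : Fin M, w i * (a (Fin.last M) * v i.castSucc (Fin.last M)) := by
              apply Finset.sum_congr rfl; intro i _
              rw [(hlcm i.castSucc (Fin.last M) (Fin.castSucc_lt_last i)).1]
          _ = (∑ i : Fin M, w i * v i.castSucc (Fin.last M)) * a (Fin.last M) := by
              rw [Finset.sum_mul]; apply Finset.sum_congr rfl; intro i _; ring
          _ = c (Fin.last M) * a (Fin.last M) := by rw [← hw]
      rw [h3, hlast]; ring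
    have hih := ih (fun i => a i.castSucc) (fun i => ha _)
      (fun i j => u i.castSucc j.castSucc) (fun i j => v i.castSucc j.castSucc)
      (fun i j hij => hlcm i.castSucc j.castSucc (by simpa using hij))
      c' hc'0 (fun i => F i.castSucc)
    -- the span of the restricted syzygies sits inside the span of all of them
    have hsub : {h : N | ∃ i j : Fin M, i < j ∧
          h = u i.castSucc j.castSucc • F i.castSucc - v i.castSucc j.castSucc • F j.castSucc}
        ⊆ {h : N | ∃ i j : Fin (M + 1), i < j ∧ h = u i j • F i - v i j • F j} := by
      rintro x ⟨i, j, hij, rfl⟩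
      exact ⟨i.castSucc, j.castSucc, by simpa using hij, rfl⟩
    have hmain := Submodule.span_mono hsub hih
    -- decompose the full sum
    have key : ∑ i : Fin (M + 1), c i • F i
        = (∑ i : Fin M, c' i • F i.castSucc)
          - ∑ i : Fin M, w i • (u i.castSucc (Fin.last M) • F i.castSucc
              - v i.castSucc (Fin.last M) • F (Fin.last M)) := by
      rw [Fin.sum_univ_castSucc]
      have h4 : ∑ i : Fin M, w i • (u i.castSucc (Fin.last M) • F i.castSucc
            - v i.castSucc (Fin.last M) • F (Fin.last M))
          = (∑ i : Fin M, (w i * u i.castSucc (Fin.last M)) • F i.castSucc)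
            - (∑ i : Fin M, w i * v i.castSucc (Fin.last M)) • F (Fin.last M) := by
        rw [Finset.sum_smul, ← Finset.sum_sub_distrib]
        apply Finset.sum_congr rfl; intro i _
        rw [smul_sub, smul_smul, smul_smul]
      have h5 : ∑ i : Fin M, c' i • F i.castSucc
          = (∑ i : Fin M, c i.castSucc • F i.castSucc)
            + ∑ i : Fin M, (w i * u i.castSucc (Fin.last M)) • F i.castSucc := by
        rw [← Finset.sum_add_distrib]
        apply Finset.sum_congr rfl; intro i _
        rw [hc', ← add_smul]
      rw [h4, h5, ← hw]
      abel
    rw [key]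
    refine sub_mem hmain (Submodule.sum_mem _ (fun i _ => Submodule.smul_mem _ _ ?_))
    exact Submodule.subset_span ⟨i.castSucc, Fin.last M, Fin.castSucc_lt_last i, rfl⟩

/-- over a PID, a combination of polynomials of equal degree whose
leading terms cancel lies in the `R`-span of the `S_R`-polynomials. -/
theorem cancellation_lemma_PID
    {n : ℕ} {R : Type*} [CommRing R] [IsDomain R] [IsPrincipalIdealRing R]
    (m : MonomialOrder (Fin n))
    {M : ℕ} (f : Fin M → MvPolynomial (Fin n) R) (hf : ∀ i, f i ≠ 0)
    (δ : Fin n →₀ ℕ) (hdeg : ∀ i, mDeg m (f i) = δ)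
    (l u v : Fin M → Fin M → R)
    (hlcm : ∀ i j : Fin M, i < j →
      IsLcmChoice (mLC m (f i)) (mLC m (f j)) (l i j) (u i j) (v i j))
    (c : Fin M → R) (g : MvPolynomial (Fin n) R) (hg : g = ∑ i, c i • f i)
    (hcancel : g = 0 ∨ (mDeg m g ≺[m] δ)) :
    g ∈ Submodule.span R {h | ∃ i j : Fin M, i < j ∧ h = sPolyPID m f u v i j} ∧
      ∀ i j : Fin M, i < j →
        sPolyPID m f u v i j = 0 ∨ (mDeg m (sPolyPID m f u v i j) ≺[m] δ) := by
  have hLC0 : ∀ i, mLC m (f i) ≠ 0 := fun i => mLC_ne_zero (hf i)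
  have hsPoly : ∀ i j : Fin M, sPolyPID m f u v i j = u i j • f i - v i j • f j := by
    intro i j
    rw [sPolyPID, hdeg i, hdeg j, sup_idem, tsub_self, ← MvPolynomial.C_apply,
      ← MvPolynomial.C_apply, MvPolynomial.C_mul', MvPolynomial.C_mul']
  have hLCδ : ∀ i, MvPolynomial.coeff δ (f i) = mLC m (f i) := by
    intro i; rw [mLC, hdeg i]
  have hcoeffδ : ∀ i j : Fin M, i < j →
      MvPolynomial.coeff δ (sPolyPID m f u v i j) = 0 := by
    intro i j hij
    obtain ⟨h1, h2, _⟩ := hlcm i j hij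
    rw [hsPoly i j, MvPolynomial.coeff_sub, MvPolynomial.coeff_smul,
      MvPolynomial.coeff_smul, hLCδ i, hLCδ j, smul_eq_mul, smul_eq_mul,
      mul_comm (u i j), mul_comm (v i j), ← h1, ← h2, sub_self]
  constructor
  · -- span membership
    have hcg : MvPolynomial.coeff δ g = 0 := by
      rcases hcancel with h | h
      · simp [h]
      · exact coeff_eq_zero_of_mDeg_lt h
    have hsum0 : ∑ i, c i * mLC m (f i) = 0 := by
      rw [hg] at hcg
      rw [MvPolynomial.coeff_sum] at hcg
      simp only [MvPolynomial.coeff_smul, smul_eq_mul, hLCδ] at hcg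
      exact hcg
    have hmain := syz_lemma M (fun i => mLC m (f i)) hLC0 u v
      (fun i j hij => by
        obtain ⟨h1, h2, h3⟩ := hlcm i j hij
        exact ⟨h1.symm.trans h2, fun c hci hcj => by rw [← h1]; exact h3 c hci hcj⟩)
      c hsum0 f
    have hset : {h : MvPolynomial (Fin n) R | ∃ i j : Fin M, i < j ∧
          h = u i j • f i - v i j • f j}
        = {h | ∃ i j : Fin M, i < j ∧ h = sPolyPID m f u v i j} := by
      ext x
      constructor
      · rintro ⟨i, j, hij, rfl⟩; exact ⟨i, j, hij, (hsPoly i j).symm⟩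
      · rintro ⟨i, j, hij, rfl⟩; exact ⟨i, j, hij, hsPoly i j⟩
    rw [hg, ← hset]
    exact hmain
  · -- degree bound on S-polynomials
    intro i j hij
    rcases eq_or_ne (sPolyPID m f u v i j) 0 with h0 | h0
    · exact Or.inl h0
    · refine Or.inr ?_
      have hd : ∀ d ∈ (sPolyPID m f u v i j).support, m.toSyn d < m.toSyn δ := by
        intro d hdm
        have hne : d ≠ δ := by
          intro h; rw [h] at hdm
          exact MvPolynomial.mem_support_iff.mp hdm (hcoeffδ i j hij)
        have hle : m.toSyn d ≤ m.toSyn δ := by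
          have hcd : MvPolynomial.coeff d (sPolyPID m f u v i j) ≠ 0 :=
            MvPolynomial.mem_support_iff.mp hdm
          rw [hsPoly i j] at hcd
          have : MvPolynomial.coeff d (f i) ≠ 0 ∨ MvPolynomial.coeff d (f j) ≠ 0 := by
            by_contra hcon
            push_neg at hcon
            apply hcd
            rw [MvPolynomial.coeff_sub, MvPolynomial.coeff_smul, MvPolynomial.coeff_smul,
              hcon.1, hcon.2]
            simp
          rcases this with h | h
          · have := le_mDeg (m := m) (MvPolynomial.mem_support_iff.mpr h)
            rwa [hdeg i] at this
          · have := le_mDeg (m := m) (MvPolynomial.mem_support_iff.mpr h)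
            rwa [hdeg j] at this
        exact lt_of_le_of_ne hle (fun h => hne (m.toSyn.injective h))
      obtain ⟨d0, hd0⟩ := MvPolynomial.support_nonempty.mpr h0
      have hbot : (⊥ : m.syn) < m.toSyn δ := lt_of_le_of_lt bot_le (hd d0 hd0)
      rw [toSyn_mDeg, Finset.sup_lt_iff hbot]
      exact hd
end

section
/- (Buchberger's criterion over a PID.) Let R be a principal ideal domain, S = R[x_1,…,x_n] with a fixed monomial order, G = {f_1,…,f_m} a family of nonzero elements of S, and U the ideal generated by f_1,…,f_m. Then G is a Gröbner basis of U if and only if for every 1 ≤ i < j ≤ m the element S_R(f_i,f_j) (for some, equivalently any, choice of least common multiples) reduces to zero modulo G. -/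
/-!
Write `g ∈ (f₁, …, fₘ)` as `∑ hᵢ fᵢ` and let `δ` be the largest degree of a summand. If
`deg g ≺ δ`, the leading coefficients of the summands of degree `δ` form a syzygy of the
`lc fᵢ`. Over a Bézout domain intersection distributes over sums of principal ideals, so such
syzygies are generated by the lcm syzygies `u i j • eᵢ - v i j • eⱼ`. Lifted to polynomials these
are shifted `S_R`-polynomials, whose standard representations have all summands below `δ`; so `δ`
can be lowered until `δ = deg g`, and then `LT g ∈ (LT f₁, …, LT fₘ)`. Conversely, for a Gröbner
basis, cancelling leading terms one at a time gives every element of the ideal, in particular every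
`S_R`-polynomial, a standard representation.
-/

open MvPolynomial
open scoped MonomialOrder

open PaperGB

theorem Ideal.span_image_inf_le_biSup_inf {R ι : Type*} [CommRing R] [IsBezout R]
    (a : ι → R) (s : Finset ι) (J : Ideal R) :
    Ideal.span (a '' s) ⊓ J ≤ ⨆ i ∈ s, Ideal.span {a i} ⊓ J := by
  classical
  obtain ⟨g, hg⟩ := IsBezout.isPrincipal_of_FG (Ideal.span (a '' s))
    ⟨s.image a, by rw [Finset.coe_image]⟩
  rw [Ideal.submodule_span_eq] at hg
  obtain ⟨β, hβ⟩ := (Submodule.mem_span_image_finset_iff_exists_fun' R).mp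
    (hg ▸ Ideal.mem_span_singleton_self g)
  have hdvd : ∀ i ∈ s, g ∣ a i := fun i hi =>
    Ideal.mem_span_singleton.mp (hg ▸ Ideal.subset_span ⟨i, hi, rfl⟩)
  choose! a' ha' using hdvd
  rintro x ⟨hxI, hxJ⟩
  obtain ⟨y, rfl⟩ := Ideal.mem_span_singleton.mp (hg ▸ hxI)
  -- `∑ β i * a' i` acts as `1` on the principal ideal `(g)`
  have hx : g * y = ∑ i ∈ s, β i * (a' i * (g * y)) := by
    conv_lhs => rw [← hβ]
    simp only [smul_eq_mul, Finset.sum_mul]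
    refine Finset.sum_congr rfl fun i hi => ?_
    rw [ha' i hi]; ring
  rw [hx]
  refine Submodule.sum_mem _ fun i hi => Ideal.mul_mem_left _ _ ?_
  refine Submodule.mem_iSup_of_mem i (Submodule.mem_iSup_of_mem hi ⟨?_, J.mul_mem_left _ hxJ⟩)
  exact Ideal.mem_span_singleton.mpr ⟨y, by rw [ha' i hi]; ring⟩

theorem IsLcmChoice.span_inf_span {R : Type*} [CommRing R] {a b l qa qb : R}
    (h : IsLcmChoice a b l qa qb) : Ideal.span {a} ⊓ Ideal.span {b} = Ideal.span {l} := by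
  obtain ⟨hla, hlb, hmin⟩ := h
  apply le_antisymm
  · rintro x ⟨hxa, hxb⟩
    exact Ideal.mem_span_singleton.mpr
      (hmin x (Ideal.mem_span_singleton.mp hxa) (Ideal.mem_span_singleton.mp hxb))
  · rw [Ideal.span_singleton_le_iff_mem]
    exact ⟨Ideal.mem_span_singleton.mpr ⟨qa, hla⟩, Ideal.mem_span_singleton.mpr ⟨qb, hlb⟩⟩

section Syzygies

variable {R ι : Type*} [CommRing R] [LinearOrder ι]

def lcmSyzygies (u v : ι → ι → R) (s : Finset ι) : Set (ι → R) :=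
  {x | ∃ i ∈ s, ∃ j ∈ s, i < j ∧ x = Pi.single i (u i j) - Pi.single j (v i j)}

theorem lcmSyzygies_mono (u v : ι → ι → R) {s t : Finset ι} (hst : s ⊆ t) :
    lcmSyzygies u v s ⊆ lcmSyzygies u v t := by
  rintro _ ⟨i, hi, j, hj, hij, rfl⟩
  exact ⟨i, hst hi, j, hst hj, hij, rfl⟩

variable [Fintype ι]

theorem linearCombination_lcmSyzygy {a : ι → R} {l u v : ι → ι → R} {i j : ι}
    (h : IsLcmChoice (a i) (a j) (l i j) (u i j) (v i j)) :
    Fintype.linearCombination R a (Pi.single i (u i j) - Pi.single j (v i j)) = 0 := by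
  rw [map_sub, Fintype.linearCombination_apply_single, Fintype.linearCombination_apply_single,
    smul_eq_mul, smul_eq_mul, mul_comm, ← h.1, mul_comm, ← h.2.1, sub_self]

theorem mem_span_lcmSyzygies [IsDomain R] [IsBezout R] {a : ι → R} (ha : ∀ i, a i ≠ 0)
    {l u v : ι → ι → R} (hlcm : ∀ i j, i < j → IsLcmChoice (a i) (a j) (l i j) (u i j) (v i j))
    {s : Finset ι} {c : ι → R} (hcs : ∀ i ∉ s, c i = 0)
    (hc : Fintype.linearCombination R a c = 0) :
    c ∈ Submodule.span R (lcmSyzygies u v s) := by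
  induction s using Finset.induction_on_max generalizing c with
  | empty =>
    rw [show c = 0 from funext fun i => hcs i (Finset.notMem_empty i)]
    exact zero_mem _
  | insert t s hlt IH =>
    have hts : t ∉ s := fun h => lt_irrefl t (hlt t h)
    have hsum : c t * a t + ∑ i ∈ s, c i * a i = 0 := by
      rw [Fintype.linearCombination_apply,
        ← Finset.sum_subset (Finset.subset_univ (insert t s)) fun i _ hi => by simp [hcs i hi],
        Finset.sum_insert hts] at hc
      simpa using hc
    have hmem : c t * a t ∈ Ideal.span (a '' s) ⊓ Ideal.span {a t} := by
      refine ⟨?_, Ideal.mem_span_singleton.mpr (dvd_mul_left _ _)⟩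
      rw [eq_neg_of_add_eq_zero_left hsum]
      exact neg_mem (Submodule.sum_mem _ fun i hi =>
        Ideal.mul_mem_left _ _ (Ideal.subset_span ⟨i, hi, rfl⟩))
    obtain ⟨μ, hμ⟩ := (Submodule.mem_iSup_finset_iff_exists_sum _ _).mp
      (Ideal.span_image_inf_le_biSup_inf a s _ hmem)
    have hμl : ∀ i ∈ s, ∃ w, w * l i t = μ i := fun i hi => by
      have hμi : (μ i : R) ∈ Ideal.span {l i t} := (hlcm i t (hlt i hi)).span_inf_span ▸ (μ i).2
      exact Ideal.mem_span_singleton'.mp hμi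
    choose! w hw using hμl
    have hct : c t = ∑ i ∈ s, w i * v i t := by
      refine mul_right_cancel₀ (ha t) ?_
      rw [← hμ, Finset.sum_mul]
      refine Finset.sum_congr rfl fun i hi => ?_
      rw [← hw i hi, (hlcm i t (hlt i hi)).2.1]
      ring
    -- adding these syzygies to `c` kills its `t`-th entry
    set z : ι → R := ∑ i ∈ s, w i • (Pi.single i (u i t) - Pi.single t (v i t)) with hz
    have hzmem : z ∈ Submodule.span R (lcmSyzygies u v (insert t s)) :=
      Submodule.sum_mem _ fun i hi => Submodule.smul_mem _ _ (Submodule.subset_span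
        ⟨i, Finset.mem_insert_of_mem hi, t, Finset.mem_insert_self t s, hlt i hi, rfl⟩)
    have hzapply : ∀ k, z k = ∑ i ∈ s,
        w i * ((Pi.single i (u i t) : ι → R) k - (Pi.single t (v i t) : ι → R) k) := by
      intro k
      simp [hz, Finset.sum_apply]
    have hc' : c + z ∈ Submodule.span R (lcmSyzygies u v s) := by
      refine IH (fun k hk => ?_) ?_
      · rw [Pi.add_apply, hzapply]
        by_cases hkt : k = t
        · subst hkt
          have hterm : ∀ i ∈ s, w i * ((Pi.single i (u i k) : ι → R) k
              - (Pi.single k (v i k) : ι → R) k) = -(w i * v i k) := fun i hi => by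
            rw [Pi.single_eq_of_ne (hlt i hi).ne', Pi.single_eq_same]
            ring
          rw [Finset.sum_congr rfl hterm, Finset.sum_neg_distrib, hct, add_neg_cancel]
        · have hterm : ∀ i ∈ s, w i * ((Pi.single i (u i t) : ι → R) k
              - (Pi.single t (v i t) : ι → R) k) = 0 := fun i hi => by
            rw [Pi.single_eq_of_ne (ne_of_mem_of_not_mem hi hk).symm, Pi.single_eq_of_ne hkt]
            ring
          rw [Finset.sum_eq_zero hterm, hcs k (by simp [hkt, hk]), add_zero]
      · rw [map_add, hz, map_sum, hc, zero_add]
        refine Finset.sum_eq_zero fun i hi => ?_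
        rw [map_smul, linearCombination_lcmSyzygy (hlcm i t (hlt i hi)), smul_zero]
    simpa using
      sub_mem (Submodule.span_mono (lcmSyzygies_mono u v (Finset.subset_insert t s)) hc') hzmem

end Syzygies

namespace MvPolynomial

variable {σ R ι : Type*} [CommSemiring R] [Fintype ι]

/-- Bounding supports rather than degrees makes these submodules and treats zero summands
uniformly. -/
def supportedCombinations (f : ι → MvPolynomial σ R) (D : Set (σ →₀ ℕ)) :
    Submodule R (MvPolynomial σ R) where
  carrier := {g | ∃ h : ι → MvPolynomial σ R, g = ∑ i, h i * f i ∧ ∀ i, ↑(h i * f i).support ⊆ D}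
  add_mem' := by
    classical
    rintro _ _ ⟨h, rfl, hh⟩ ⟨h', rfl, hh'⟩
    refine ⟨h + h', by simp only [Pi.add_apply, add_mul, Finset.sum_add_distrib], fun i => ?_⟩
    rw [Pi.add_apply, add_mul]
    exact (Finset.coe_subset.mpr support_add).trans (by simpa using ⟨hh i, hh' i⟩)
  zero_mem' := ⟨0, by simp, fun i => by simp⟩
  smul_mem' := by
    rintro r _ ⟨h, rfl, hh⟩
    refine ⟨r • h, by simp only [Pi.smul_apply, smul_mul_assoc, Finset.smul_sum], fun i => ?_⟩
    rw [Pi.smul_apply, smul_mul_assoc]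
    exact (Finset.coe_subset.mpr support_smul).trans (hh i)

variable {f : ι → MvPolynomial σ R} {D D' : Set (σ →₀ ℕ)}

theorem sum_mul_mem_supportedCombinations {h : ι → MvPolynomial σ R}
    (hh : ∀ i, ↑(h i * f i).support ⊆ D) : ∑ i, h i * f i ∈ supportedCombinations f D :=
  ⟨h, rfl, hh⟩

theorem supportedCombinations_mono (hD : D ⊆ D') :
    supportedCombinations f D ≤ supportedCombinations f D' := by
  rintro _ ⟨h, rfl, hh⟩
  exact ⟨h, rfl, fun i => (hh i).trans hD⟩

theorem support_subset_of_mem_supportedCombinations {g : MvPolynomial σ R}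
    (hg : g ∈ supportedCombinations f D) : ↑g.support ⊆ D := by
  classical
  obtain ⟨h, rfl, hh⟩ := hg
  intro e he
  obtain ⟨i, -, hi⟩ := Finset.mem_biUnion.mp (support_sum he)
  exact hh i hi

theorem monomial_mul_mem_supportedCombinations {g : MvPolynomial σ R}
    (hg : g ∈ supportedCombinations f D) (a : σ →₀ ℕ) (r : R) (hD : ∀ e ∈ D, a + e ∈ D') :
    monomial a r * g ∈ supportedCombinations f D' := by
  obtain ⟨h, rfl, hh⟩ := hg
  refine ⟨fun i => monomial a r * h i, by simp only [Finset.mul_sum, mul_assoc], fun i e he => ?_⟩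
  rw [Finset.mem_coe, mem_support_iff, mul_assoc, coeff_monomial_mul'] at he
  split_ifs at he with hae
  · rw [← add_tsub_cancel_of_le hae]
    exact hD _ (hh i (mem_support_iff.mpr (right_ne_zero_of_mul he)))
  · exact absurd rfl he

end MvPolynomial

namespace MonomialOrder

variable {σ R ι : Type*} [CommRing R] [Fintype ι] (m : MonomialOrder σ)
  {f : ι → MvPolynomial σ R} {g : MvPolynomial σ R}

theorem degree_monomial_tsub_mul_le {p : MvPolynomial σ R} {L : σ →₀ ℕ} (hp : m.degree p ≤ L)
    (c : R) : m.degree (monomial (L - m.degree p) c * p) ≼[m] L := by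
  refine degree_mul_le.trans ?_
  rw [← tsub_add_cancel_of_le hp, map_add, map_add, add_tsub_cancel_right]
  exact add_le_add_left (degree_monomial_le c) _

theorem coeff_monomial_tsub_mul {p : MvPolynomial σ R} {L : σ →₀ ℕ} (hp : m.degree p ≤ L)
    (c : R) : (monomial (L - m.degree p) c * p).coeff L = c * m.leadingCoeff p := by
  conv_lhs => rw [← tsub_add_cancel_of_le hp]
  rw [add_tsub_cancel_right, coeff_monomial_mul]
  rfl

theorem degree_lt_of_coeff_eq_zero {p : MvPolynomial σ R} {d : σ →₀ ℕ} (hp : p ≠ 0)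
    (hle : m.degree p ≼[m] d) (hd : p.coeff d = 0) : m.degree p ≺[m] d :=
  lt_of_le_of_ne hle fun h => (m.coeff_degree_ne_zero_iff.mpr hp) (m.toSyn.injective h ▸ hd)

theorem degree_monomial_tsub_mul_sub_lt {p q : MvPolynomial σ R} {L : σ →₀ ℕ} {a b : R}
    (hp : m.degree p ≤ L) (hq : m.degree q ≤ L)
    (hab : a * m.leadingCoeff p = b * m.leadingCoeff q)
    (hne : monomial (L - m.degree p) a * p - monomial (L - m.degree q) b * q ≠ 0) :
    m.degree (monomial (L - m.degree p) a * p - monomial (L - m.degree q) b * q) ≺[m] L := by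
  refine m.degree_lt_of_coeff_eq_zero hne (degree_sub_le.trans
    (max_le (m.degree_monomial_tsub_mul_le hp a) (m.degree_monomial_tsub_mul_le hq b))) ?_
  rw [coeff_sub, m.coeff_monomial_tsub_mul hp, m.coeff_monomial_tsub_mul hq, hab, sub_self]

theorem exists_coeff_mul_eq_and_support_sub_lt [NoZeroDivisors R] {h f : MvPolynomial σ R}
    {d : σ →₀ ℕ} (hd : m.degree (h * f) ≼[m] d) :
    ∃ c : R, (c ≠ 0 → m.degree f ≤ d) ∧ (h * f).coeff d = c * m.leadingCoeff f ∧
      ↑((h - monomial (d - m.degree f) c) * f).support ⊆ {e | e ≺[m] d} := by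
  by_cases htop : h * f ≠ 0 ∧ m.degree (h * f) = d
  · obtain ⟨hne, rfl⟩ := htop
    have hdeg := m.degree_mul' hne
    refine ⟨m.leadingCoeff h, fun _ => hdeg ▸ le_add_self, by rw [← leadingCoeff_mul]; rfl, ?_⟩
    rw [hdeg, add_tsub_cancel_right]
    change ((((h - m.leadingTerm h) * f).support : Set (σ →₀ ℕ))) ⊆ _
    intro e he
    have hne' : (h - m.leadingTerm h) * f ≠ 0 := by
      rintro h0
      simp [h0] at he
    have hlt : m.degree ((h - m.leadingTerm h) * f) ≺[m] m.degree (h * f) :=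
      (m.degree_mul_lt_iff_left_lt_of_ne_zero (left_ne_zero_of_mul hne')
        (right_ne_zero_of_mul hne)).mpr (degree_sub_leadingTerm_lt_iff.mpr
          (m.degree_ne_zero_of_sub_leadingTerm_ne_zero (left_ne_zero_of_mul hne')))
    exact (m.le_degree he).trans_lt (hdeg ▸ hlt)
  · have hlt : h * f ≠ 0 → m.degree (h * f) ≺[m] d := fun hne =>
      lt_of_le_of_ne hd fun heq => htop ⟨hne, m.toSyn.injective heq⟩
    refine ⟨0, fun h0 => absurd rfl h0, ?_, ?_⟩
    · rw [zero_mul]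
      by_cases hne : h * f = 0
      · rw [hne, coeff_zero]
      · exact m.coeff_eq_zero_of_lt (hlt hne)
    · rw [map_zero, sub_zero]
      intro e he
      exact (m.le_degree he).trans_lt (hlt fun h0 => by simp [h0] at he)

theorem exists_leadingCoeff_eq_sum_of_leadingTerm_mem
    (hg : m.leadingTerm g ∈ Ideal.span (Set.range fun i => m.leadingTerm (f i))) :
    ∃ r : ι → R, m.leadingCoeff g = ∑ i, r i * m.leadingCoeff (f i) ∧
      ∀ i, r i ≠ 0 → m.degree (f i) ≤ m.degree g := by
  classical
  obtain ⟨q, hq⟩ := Ideal.mem_span_range_iff_exists_fun.mp hg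
  refine ⟨fun i => if m.degree (f i) ≤ m.degree g
    then (q i).coeff (m.degree g - m.degree (f i)) else 0, ?_, fun i hi => ?_⟩
  · have hcoeff := congrArg (coeff (m.degree g)) hq
    rw [coeff_sum, leadingTerm, coeff_monomial, if_pos rfl] at hcoeff
    rw [← hcoeff]
    refine Finset.sum_congr rfl fun i _ => ?_
    rw [leadingTerm, coeff_mul_monomial', ite_mul, zero_mul]
  · by_contra hle
    exact hi (if_neg hle)

theorem leadingTerm_mem_span_of_mem_supportedCombinations [NoZeroDivisors R]
    (hg : g ∈ supportedCombinations f {e | e ≼[m] m.degree g}) :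
    m.leadingTerm g ∈ Ideal.span (Set.range fun i => m.leadingTerm (f i)) := by
  obtain ⟨h, hgh, hh⟩ := hg
  choose c hc hcoeff _ using fun i =>
    m.exists_coeff_mul_eq_and_support_sub_lt (m.degree_le_iff.mpr fun e he => hh i he)
  have hlc : m.leadingCoeff g = ∑ i, c i * m.leadingCoeff (f i) := by
    have := congrArg (coeff (m.degree g)) hgh
    rwa [coeff_sum, Finset.sum_congr rfl fun i _ => hcoeff i] at this
  have hLT : m.leadingTerm g =
      ∑ i, monomial (m.degree g - m.degree (f i)) (c i) * m.leadingTerm (f i) := by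
    rw [leadingTerm, hlc, map_sum]
    refine Finset.sum_congr rfl fun i _ => ?_
    by_cases hci : c i = 0
    · simp [hci]
    · rw [leadingTerm, monomial_mul, tsub_add_cancel_of_le (hc i hci)]
  rw [hLT]
  exact Submodule.sum_mem _ fun i _ => Ideal.mul_mem_left _ _ (Ideal.subset_span ⟨i, rfl⟩)

theorem sum_mul_mem_supportedCombinations_le_sup (h : ι → MvPolynomial σ R) :
    ∑ i, h i * f i ∈ supportedCombinations f
      {e | m.toSyn e ≤ Finset.univ.sup fun i => m.toSyn (m.degree (h i * f i))} :=
  sum_mul_mem_supportedCombinations fun i _ he => (m.le_degree he).trans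
    (Finset.le_sup (f := fun i => m.toSyn (m.degree (h i * f i))) (Finset.mem_univ i))

theorem mem_supportedCombinations_of_leadingTerm_mem
    (hLT : ∀ g ∈ Ideal.span (Set.range f), g ≠ 0 →
      m.leadingTerm g ∈ Ideal.span (Set.range fun i => m.leadingTerm (f i)))
    (hg : g ∈ Ideal.span (Set.range f)) :
    g ∈ supportedCombinations f {e | e ≼[m] m.degree g} := by
  induction hδ : m.toSyn (m.degree g) using WellFoundedLT.induction generalizing g with
  | _ δ IH =>
  subst hδ
  by_cases hg0 : g = 0
  · rw [hg0]
    exact zero_mem _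
  obtain ⟨r, hr, hrle⟩ := m.exists_leadingCoeff_eq_sum_of_leadingTerm_mem (hLT g hg hg0)
  set q := ∑ i, monomial (m.degree g - m.degree (f i)) (r i) * f i
  have hq : q ∈ supportedCombinations f {e | e ≼[m] m.degree g} := by
    refine sum_mul_mem_supportedCombinations fun i e he => ?_
    by_cases hri : r i = 0
    · simp [hri] at he
    exact (m.le_degree he).trans (m.degree_monomial_tsub_mul_le (hrle i hri) (r i))
  have hcoeff : q.coeff (m.degree g) = g.coeff (m.degree g) := by
    change _ = m.leadingCoeff g
    rw [coeff_sum, hr]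
    refine Finset.sum_congr rfl fun i _ => ?_
    by_cases hri : r i = 0
    · simp [hri]
    · exact m.coeff_monomial_tsub_mul (hrle i hri) (r i)
  have hgq : g - q ∈ supportedCombinations f {e | e ≼[m] m.degree g} := by
    by_cases h0 : g - q = 0
    · rw [h0]
      exact zero_mem _
    have hlt : m.degree (g - q) ≺[m] m.degree g := m.degree_lt_of_coeff_eq_zero h0
      (degree_sub_le.trans (max_le le_rfl
        (m.degree_le_iff.mpr (support_subset_of_mem_supportedCombinations hq))))
      (by rw [coeff_sub, hcoeff, sub_self])
    have hqI : q ∈ Ideal.span (Set.range f) :=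
      Submodule.sum_mem _ fun i _ => Ideal.mul_mem_left _ _ (Ideal.subset_span ⟨i, rfl⟩)
    exact supportedCombinations_mono (fun e he => le_trans he hlt.le)
      (IH _ hlt (sub_mem hg hqI) rfl)
  simpa using add_mem hgq hq

end MonomialOrder

namespace PaperGB

variable {n M : ℕ} {R : Type*} [CommRing R] (m : MonomialOrder (Fin n))
  {f : Fin M → MvPolynomial (Fin n) R} {l u v : Fin M → Fin M → R}

theorem mDeg_eq_degree (p : MvPolynomial (Fin n) R) : mDeg m p = m.degree p := rfl

theorem reducesToZero_iff_mem_supportedCombinations [NoZeroDivisors R]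
    {g : MvPolynomial (Fin n) R} :
    ReducesToZero m f g ↔ g ∈ supportedCombinations f {e | e ≼[m] m.degree g} := by
  have hdeg : ∀ p : Fin M → MvPolynomial (Fin n) R, ∀ i,
      (p i * f i ≠ 0 → mDeg m (p i) + mDeg m (f i) ≼[m] mDeg m g) ↔
        ↑(p i * f i).support ⊆ {e | e ≼[m] m.degree g} := fun p i => by
    simp only [mDeg_eq_degree]
    constructor
    · intro h e he
      have hne : p i * f i ≠ 0 := by
        rintro h0
        simp [h0] at he
      exact (m.le_degree he).trans (m.degree_mul' hne ▸ h hne)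
    · intro h hne
      rw [← m.degree_mul' hne]
      exact h (m.degree_mem_support hne)
  exact exists_congr fun p => and_congr_right fun _ => forall_congr' (hdeg p)

theorem sPolyPID_mem_supportedCombinations_lt [NoZeroDivisors R] {i j : Fin M}
    (hlcm : IsLcmChoice (mLC m (f i)) (mLC m (f j)) (l i j) (u i j) (v i j))
    (hS : ReducesToZero m f (sPolyPID m f u v i j)) :
    sPolyPID m f u v i j ∈
      supportedCombinations f {e | e ≺[m] m.degree (f i) ⊔ m.degree (f j)} := by
  by_cases h0 : sPolyPID m f u v i j = 0
  · rw [h0]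
    exact zero_mem _
  have hlt := m.degree_monomial_tsub_mul_sub_lt le_sup_left le_sup_right
    (by rw [mul_comm, mul_comm (v i j)]; exact hlcm.1.symm.trans hlcm.2.1) h0
  exact supportedCombinations_mono (fun e he => lt_of_le_of_lt he hlt)
    ((reducesToZero_iff_mem_supportedCombinations m).mp hS)

theorem linearCombination_mem_supportedCombinations_lt
    (hS : ∀ i j, i < j → sPolyPID m f u v i j ∈
      supportedCombinations f {e | e ≺[m] m.degree (f i) ⊔ m.degree (f j)})
    (d : Fin n →₀ ℕ) {c : Fin M → R}
    (hc : c ∈ Submodule.span R (lcmSyzygies u v (Finset.univ.filter fun i => m.degree (f i) ≤ d))) :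
    Fintype.linearCombination R (fun i => monomial (d - m.degree (f i)) 1 * f i) c ∈
      supportedCombinations f {e | e ≺[m] d} := by
  refine (Submodule.span_le (p := (supportedCombinations f {e | e ≺[m] d}).comap
    (Fintype.linearCombination R fun i => monomial (d - m.degree (f i)) 1 * f i))).mpr ?_ hc
  rintro _ ⟨i, hi, j, hj, hij, rfl⟩
  simp only [Finset.mem_filter, Finset.mem_univ, true_and] at hi hj
  set L := m.degree (f i) ⊔ m.degree (f j)
  have hLd : L ≤ d := sup_le hi hj
  have hshift : ∀ k (a : R), m.degree (f k) ≤ L →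
      a • (monomial (d - m.degree (f k)) 1 * f k) =
        monomial (d - L) 1 * (monomial (L - m.degree (f k)) a * f k) := fun k a hk => by
    rw [← mul_assoc, monomial_mul, one_mul, tsub_add_tsub_cancel hLd hk, ← smul_mul_assoc,
      smul_monomial, smul_eq_mul, mul_one]
  rw [SetLike.mem_coe, Submodule.mem_comap, map_sub, Fintype.linearCombination_apply_single,
    Fintype.linearCombination_apply_single, hshift i _ le_sup_left, hshift j _ le_sup_right,
    ← mul_sub]
  refine monomial_mul_mem_supportedCombinations (hS i j hij) _ 1 fun e he => ?_
  have := add_lt_add_left he (m.toSyn (d - L))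
  rwa [← map_add, ← map_add, add_tsub_cancel_of_le hLd, add_comm] at this

theorem mem_supportedCombinations_lt_of_coeff_eq_zero [IsDomain R] [IsBezout R]
    (hf : ∀ i, f i ≠ 0)
    (hlcm : ∀ i j, i < j → IsLcmChoice (mLC m (f i)) (mLC m (f j)) (l i j) (u i j) (v i j))
    (hS : ∀ i j, i < j → sPolyPID m f u v i j ∈
      supportedCombinations f {e | e ≺[m] m.degree (f i) ⊔ m.degree (f j)})
    {d : Fin n →₀ ℕ} {g : MvPolynomial (Fin n) R}
    (hg : g ∈ supportedCombinations f {e | e ≼[m] d}) (hgd : g.coeff d = 0) :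
    g ∈ supportedCombinations f {e | e ≺[m] d} := by
  obtain ⟨h, rfl, hh⟩ := hg
  -- `c i` is the leading coefficient of `h i` if `h i * f i` has degree `d`, and `0` otherwise
  choose c hc hcoeff hlow using fun i =>
    m.exists_coeff_mul_eq_and_support_sub_lt (m.degree_le_iff.mpr fun e he => hh i he)
  have hsyz : c ∈ Submodule.span R
      (lcmSyzygies u v (Finset.univ.filter fun i => m.degree (f i) ≤ d)) := by
    refine mem_span_lcmSyzygies (fun i => m.leadingCoeff_ne_zero_iff.mpr (hf i)) hlcm
      (fun i hi => ?_) ?_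
    · by_contra hci
      exact hi (Finset.mem_filter.mpr ⟨Finset.mem_univ i, hc i hci⟩)
    · rw [Fintype.linearCombination_apply, ← hgd, coeff_sum]
      exact Finset.sum_congr rfl fun i _ => (hcoeff i).symm
  have hsplit : ∑ i, h i * f i = ∑ i, (h i - monomial (d - m.degree (f i)) (c i)) * f i +
      Fintype.linearCombination R (fun i => monomial (d - m.degree (f i)) 1 * f i) c := by
    rw [Fintype.linearCombination_apply, ← Finset.sum_add_distrib]
    refine Finset.sum_congr rfl fun i _ => ?_
    rw [← smul_mul_assoc, smul_monomial, smul_eq_mul, mul_one, sub_mul, sub_add_cancel]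
  rw [hsplit]
  exact add_mem (sum_mul_mem_supportedCombinations hlow)
    (linearCombination_mem_supportedCombinations_lt m hS d hsyz)

theorem mem_supportedCombinations_of_reducesToZero_sPolyPID [IsDomain R] [IsBezout R]
    (hf : ∀ i, f i ≠ 0)
    (hlcm : ∀ i j, i < j → IsLcmChoice (mLC m (f i)) (mLC m (f j)) (l i j) (u i j) (v i j))
    (hS : ∀ i j, i < j → ReducesToZero m f (sPolyPID m f u v i j))
    {g : MvPolynomial (Fin n) R} (hg : g ∈ Ideal.span (Set.range f)) :
    g ∈ supportedCombinations f {e | e ≼[m] m.degree g} := by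
  have hS' i j hij := sPolyPID_mem_supportedCombinations_lt m (hlcm i j hij) (hS i j hij)
  obtain ⟨h, rfl⟩ := Ideal.mem_span_range_iff_exists_fun.mp hg
  suffices key : ∀ δ, ∀ g ∈ supportedCombinations f {e | m.toSyn e ≤ δ},
      g ∈ supportedCombinations f {e | e ≼[m] m.degree g} from
    key _ _ (m.sum_mul_mem_supportedCombinations_le_sup h)
  intro δ
  induction δ using WellFoundedLT.induction with
  | _ δ IH =>
  intro g hg
  obtain ⟨d, rfl⟩ := m.toSyn.surjective δ
  have hgd : m.degree g ≼[m] d :=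
    m.degree_le_iff.mpr fun e he => support_subset_of_mem_supportedCombinations hg he
  rcases hgd.lt_or_eq with hlt | heq
  · obtain ⟨h, rfl, hh⟩ := mem_supportedCombinations_lt_of_coeff_eq_zero m hf hlcm hS' hg
      (m.coeff_eq_zero_of_lt hlt)
    refine IH _ ((Finset.sup_lt_iff ((m.zero_le _).trans_lt hlt)).mpr fun i _ => ?_) _
      (m.sum_mul_mem_supportedCombinations_le_sup h)
    by_cases h0 : h i * f i = 0
    · rw [h0, MonomialOrder.degree_zero, map_zero]
      exact (m.zero_le _).trans_lt hlt
    · exact hh i (m.degree_mem_support h0)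
  · rwa [heq]

end PaperGB

/-- Buchberger's criterion over a PID. -/
theorem buchberger_criterion_PID
    {n : ℕ} {R : Type*} [CommRing R] [IsDomain R] [IsPrincipalIdealRing R]
    (m : MonomialOrder (Fin n))
    {M : ℕ} (f : Fin M → MvPolynomial (Fin n) R) (hf : ∀ i, f i ≠ 0)
    (l u v : Fin M → Fin M → R)
    (hlcm : ∀ i j : Fin M, i < j →
      IsLcmChoice (mLC m (f i)) (mLC m (f j)) (l i j) (u i j) (v i j)) :
    IsGroebnerBasis m (Ideal.span (Set.range f)) f ↔
      ∀ i j : Fin M, i < j → ReducesToZero m f (sPolyPID m f u v i j) := by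
  have hfI : ∀ i, f i ∈ Ideal.span (Set.range f) := fun i => Ideal.subset_span ⟨i, rfl⟩
  constructor
  · rintro ⟨-, -, hLT⟩ i j _
    have hSI : sPolyPID m f u v i j ∈ Ideal.span (Set.range f) :=
      sub_mem (Ideal.mul_mem_left _ _ (hfI i)) (Ideal.mul_mem_left _ _ (hfI j))
    refine (reducesToZero_iff_mem_supportedCombinations m).mpr
      (m.mem_supportedCombinations_of_leadingTerm_mem (fun g hg hg0 => ?_) hSI)
    exact hLT ▸ Ideal.subset_span ⟨g, ⟨hg, hg0⟩, rfl⟩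
  · intro hS
    refine ⟨hf, hfI, le_antisymm (Ideal.span_le.mpr ?_) (Ideal.span_le.mpr ?_)⟩
    · rintro _ ⟨i, rfl⟩
      exact Ideal.subset_span ⟨f i, ⟨hfI i, hf i⟩, rfl⟩
    · rintro _ ⟨g, ⟨hg, -⟩, rfl⟩
      exact m.leadingTerm_mem_span_of_mem_supportedCombinations
        (mem_supportedCombinations_of_reducesToZero_sPolyPID m hf hlcm hS hg)
end
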